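/- arXiv:1511.04312 — 8 statements merged into one kernel-verified Lean document; each statement's English description precedes it below -/
import Mathlib

section
/- Let 0 < q ≤ 1, let τ ≥ 2 be an integer, and set h := 2τ. Then for all real numbers u, v with 0 ≤ v ≤ u, one has (max{0, u^(1/q) - (τ-1)·v^(1/q)})^q ≥ u + (τ-1)·v - h·v. -/
open Real

theorem stmt_2 (q : ℝ) (hq0 : 0 < q) (hq1 : q ≤ 1) (τ : ℕ) (hτ : 2 ≤ τ)
    (h : ℝ) (hh : h = 2 * τ) (u v : ℝ) (hv : 0 ≤ v) (hvu : v ≤ u) :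
    u + (τ - 1 : ℝ) * v - h * v ≤ (max 0 (u ^ (1 / q) - (τ - 1 : ℝ) * v ^ (1 / q))) ^ q := by
  have hu : (0:ℝ) ≤ u := le_trans hv hvu
  have hτ1 : (1:ℝ) ≤ (τ - 1 : ℝ) := by
    have : (2:ℝ) ≤ τ := by exact_mod_cast hτ
    linarith
  set A := u ^ (1/q) with hA
  set B := v ^ (1/q) with hB
  have hA0 : 0 ≤ A := Real.rpow_nonneg hu _
  have hB0 : 0 ≤ B := Real.rpow_nonneg hv _
  have hAq : A ^ q = u := by
    rw [hA, ← Real.rpow_mul hu]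
    simp [one_div, inv_mul_cancel₀ hq0.ne']
  have hBq : B ^ q = v := by
    rw [hB, ← Real.rpow_mul hv]
    simp [one_div, inv_mul_cancel₀ hq0.ne']
  -- ((τ-1)B)^q ≤ (τ+1) * v
  have hkey : ((τ - 1 : ℝ) * B) ^ q ≤ (τ + 1 : ℝ) * v := by
    rw [Real.mul_rpow (by linarith) hB0, hBq]
    have h1 : (τ - 1 : ℝ) ^ q ≤ (τ - 1 : ℝ) := by
      nth_rewrite 2 [← Real.rpow_one (τ - 1 : ℝ)]
      exact Real.rpow_le_rpow_of_exponent_le hτ1 hq1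
    have h2 : (τ - 1 : ℝ) ^ q ≤ (τ + 1 : ℝ) := by linarith
    exact mul_le_mul_of_nonneg_right h2 hv |>.trans_eq rfl
  have hlhs : u + (τ - 1 : ℝ) * v - h * v = u - (τ + 1 : ℝ) * v := by
    rw [hh]; ring
  rw [hlhs]
  rcases le_or_gt A ((τ - 1 : ℝ) * B) with hc | hc
  · -- max is 0
    have hmax : max 0 (A - (τ - 1 : ℝ) * B) = 0 := max_eq_left (by linarith)
    rw [hmax, Real.zero_rpow hq0.ne']
    have : A ^ q ≤ ((τ - 1 : ℝ) * B) ^ q :=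
      Real.rpow_le_rpow hA0 hc hq0.le
    rw [hAq] at this
    linarith
  · have hmax : max 0 (A - (τ - 1 : ℝ) * B) = A - (τ - 1 : ℝ) * B :=
      max_eq_right (by linarith)
    rw [hmax]
    -- subadditivity: A^q ≤ (A - (τ-1)B)^q + ((τ-1)B)^q
    have hsub : A ^ q ≤ (A - (τ - 1 : ℝ) * B) ^ q + ((τ - 1 : ℝ) * B) ^ q := by
      have h1 : (0:ℝ) ≤ A - (τ - 1 : ℝ) * B := by linarith
      have h2 : (0:ℝ) ≤ (τ - 1 : ℝ) * B := mul_nonneg (by linarith) hB0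
      have := NNReal.rpow_add_le_add_rpow ⟨_, h1⟩ ⟨_, h2⟩ hq0.le hq1
      have h3 : A = (A - (τ - 1 : ℝ) * B) + (τ - 1 : ℝ) * B := by ring
      calc A ^ q = ((A - (τ - 1 : ℝ) * B) + (τ - 1 : ℝ) * B) ^ q := by rw [← h3]
        _ ≤ _ := by
            exact_mod_cast this
    rw [hAq] at hsub
    linarith
end

section
/- Let q > 1, let τ ≥ 2 be an integer, and set h := (q+2)·τ^q. Then for all real numbers u, v with 0 ≤ v ≤ u, one has (max{0, u^(1/q) - (τ-1)·v^(1/q)})^q ≥ u + (τ-1)·v - h·u^(1-1/q)·v^(1/q). -/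
open Real

lemma key_aux (q : ℝ) (hq : 1 < q) (c : ℝ) (hc1 : 1 ≤ c) (a b : ℝ)
    (hb : 0 ≤ b) (hba : b ≤ a) :
    a ^ q + c * b ^ q - (q + 2) * (c + 1) ^ q * a ^ (q - 1) * b ≤
      (max 0 (a - c * b)) ^ q := by
  have ha : 0 ≤ a := hb.trans hba
  have hq0 : (0 : ℝ) < q := by linarith
  have hq1 : (0 : ℝ) ≤ q - 1 := by linarith
  have hbq : b ^ q ≤ a ^ (q - 1) * b := by
    calc b ^ q = b ^ (q - 1) * b := by
          rw [← Real.rpow_add_one' (by linarith) (by linarith)]; ring_nf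
      _ ≤ a ^ (q - 1) * b :=
          mul_le_mul_of_nonneg_right (Real.rpow_le_rpow hb hba hq1) hb
  have hc1q : c + 1 ≤ (c + 1) ^ q := by
    calc c + 1 = (c + 1) ^ (1:ℝ) := (Real.rpow_one _).symm
      _ ≤ (c + 1) ^ q := Real.rpow_le_rpow_of_exponent_le (by linarith) hq.le
  have hc1q0 : (0:ℝ) ≤ (c + 1) ^ q := Real.rpow_nonneg (by linarith) q
  have haq1 : (0:ℝ) ≤ a ^ (q - 1) := Real.rpow_nonneg ha _
  have hX : 0 ≤ a ^ (q - 1) * b := mul_nonneg haq1 hb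
  have hYX : (q + 2) * ((c + 1) * (a ^ (q - 1) * b)) ≤
      (q + 2) * ((c + 1) ^ q * (a ^ (q - 1) * b)) :=
    mul_le_mul_of_nonneg_left (mul_le_mul_of_nonneg_right hc1q hX) (by linarith)
  have hcbq : c * b ^ q ≤ c * (a ^ (q - 1) * b) :=
    mul_le_mul_of_nonneg_left hbq (by linarith)
  rcases le_or_gt a (c * b) with hcase | hcase
  · rw [max_eq_left (by linarith), Real.zero_rpow hq0.ne']
    have haq : a ^ q ≤ a ^ (q - 1) * (c * b) := by
      calc a ^ q = a ^ (q - 1) * a := by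
            rw [← Real.rpow_add_one' (by linarith) (by linarith)]; ring_nf
        _ ≤ a ^ (q - 1) * (c * b) := by nlinarith
    have hc2 : 2 * c * (a ^ (q - 1) * b) ≤ (q + 2) * (c + 1) * (a ^ (q - 1) * b) :=
      mul_le_mul_of_nonneg_right (show 2 * c ≤ (q + 2) * (c + 1) by nlinarith) hX
    linarith [haq, hcbq, hc2, hYX]
  · have ha0 : 0 < a := lt_of_le_of_lt (by nlinarith) hcase
    rw [max_eq_right (by linarith)]
    -- Bernoulli: a^q - q * a^(q-1) * (c*b) ≤ (a - c*b)^q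
    have hs : (-1:ℝ) ≤ -(c * b) / a := by
      rw [neg_div, neg_le_neg_iff, div_le_one ha0]; linarith
    have hber := one_add_mul_self_le_rpow_one_add hs hq.le
    have heq : (1 + -(c * b) / a) = (a - c * b) / a := by field_simp; ring
    rw [heq] at hber
    have hdiv : ((a - c * b) / a) ^ q = (a - c * b) ^ q / a ^ q := by
      rw [Real.div_rpow (by linarith) ha]
    rw [hdiv] at hber
    have haqpos : 0 < a ^ q := Real.rpow_pos_of_pos ha0 q
    have hber2 : a ^ q + q * (-(c * b) / a) * a ^ q ≤ (a - c * b) ^ q := by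
      have := mul_le_mul_of_nonneg_right hber haqpos.le
      calc a ^ q + q * (-(c * b) / a) * a ^ q
          = (1 + q * (-(c * b) / a)) * a ^ q := by ring
        _ ≤ (a - c * b) ^ q / a ^ q * a ^ q := this
        _ = (a - c * b) ^ q := by field_simp
    have hkey : a ^ q - q * (c * b) * a ^ (q - 1) ≤ (a - c * b) ^ q := by
      have h1 : q * (-(c * b) / a) * a ^ q = -(q * (c * b) * a ^ (q - 1)) := by
        have : a ^ q = a ^ (q - 1) * a := by
          rw [← Real.rpow_add_one' (by linarith) (by linarith)]; ring_nf
        rw [this]; field_simp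
      rw [h1] at hber2; linarith
    have hc3 : (q + 1) * c * (a ^ (q - 1) * b) ≤ (q + 2) * (c + 1) * (a ^ (q - 1) * b) :=
      mul_le_mul_of_nonneg_right (show (q + 1) * c ≤ (q + 2) * (c + 1) by nlinarith) hX
    linarith [hkey, hcbq, hc3, hYX]

theorem stmt_3 (q : ℝ) (hq : 1 < q) (τ : ℕ) (hτ : 2 ≤ τ)
    (h : ℝ) (hh : h = (q + 2) * (τ : ℝ) ^ q) (u v : ℝ) (hv : 0 ≤ v) (hvu : v ≤ u) :
    u + (τ - 1 : ℝ) * v - h * u ^ (1 - 1 / q) * v ^ (1 / q) ≤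
      (max 0 (u ^ (1 / q) - (τ - 1 : ℝ) * v ^ (1 / q))) ^ q := by
  have hu : 0 ≤ u := hv.trans hvu
  have hq0 : (0:ℝ) < q := by linarith
  set a := u ^ (1 / q) with ha_def
  set b := v ^ (1 / q) with hb_def
  have hb : 0 ≤ b := Real.rpow_nonneg hv _
  have hba : b ≤ a := Real.rpow_le_rpow hv hvu (by positivity)
  have hua : u = a ^ q := by
    rw [ha_def, ← Real.rpow_mul hu, one_div_mul_cancel hq0.ne', Real.rpow_one]
  have hvb : v = b ^ q := by
    rw [hb_def, ← Real.rpow_mul hv, one_div_mul_cancel hq0.ne', Real.rpow_one]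
  have hu1 : u ^ (1 - 1 / q) = a ^ (q - 1) := by
    rw [ha_def, ← Real.rpow_mul hu]
    congr 1
    field_simp
  have hc1 : (1:ℝ) ≤ (τ:ℝ) - 1 := by
    have : (2:ℝ) ≤ (τ:ℝ) := by exact_mod_cast hτ
    linarith
  have hkey := key_aux q hq ((τ:ℝ) - 1) hc1 a b hb hba
  have hτq : ((τ:ℝ) - 1) + 1 = (τ:ℝ) := by ring
  rw [hτq] at hkey
  rw [hh, hu1, hua, hvb]
  exact hkey
end

section
/- Let 0 < q ≤ 1, let τ ≥ 2 be an integer, and set h := 2τ. Then for all real numbers u, v with 0 ≤ v ≤ u, one has (u^(1/q) + (τ-1)·v^(1/q))^q ≤ u + h·v. -/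
open Real

lemma real_rpow_add_le_add_rpow {p : ℝ} (a b : ℝ) (ha : 0 ≤ a) (hb : 0 ≤ b)
    (hp : 0 ≤ p) (hp1 : p ≤ 1) : (a + b) ^ p ≤ a ^ p + b ^ p := by
  lift a to NNReal using ha
  lift b to NNReal using hb
  have := NNReal.rpow_add_le_add_rpow a b hp hp1
  exact_mod_cast this

theorem stmt_4 (q : ℝ) (hq0 : 0 < q) (hq1 : q ≤ 1) (τ : ℕ) (hτ : 2 ≤ τ)
    (h : ℝ) (hh : h = 2 * τ) (u v : ℝ) (hv : 0 ≤ v) (hvu : v ≤ u) :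
    (u ^ (1 / q) + (τ - 1 : ℝ) * v ^ (1 / q)) ^ q ≤ u + h * v := by
  have hu : (0:ℝ) ≤ u := hv.trans hvu
  have hτ1 : (1:ℝ) ≤ (τ:ℝ) - 1 := by
    have : (2:ℝ) ≤ τ := by exact_mod_cast hτ
    linarith
  have ha : (0:ℝ) ≤ u ^ (1/q) := rpow_nonneg hu _
  have hb : (0:ℝ) ≤ ((τ:ℝ) - 1) * v ^ (1/q) :=
    mul_nonneg (by linarith) (rpow_nonneg hv _)
  have key := real_rpow_add_le_add_rpow (u ^ (1/q)) (((τ:ℝ) - 1) * v ^ (1/q)) ha hb hq0.le hq1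
  have h1 : (u ^ (1/q)) ^ q = u := by
    rw [← rpow_mul hu, one_div, inv_mul_cancel₀ hq0.ne', rpow_one]
  have h2 : (((τ:ℝ) - 1) * v ^ (1/q)) ^ q = ((τ:ℝ) - 1) ^ q * v := by
    rw [mul_rpow (by linarith) (rpow_nonneg hv _), ← rpow_mul hv, one_div,
      inv_mul_cancel₀ hq0.ne', rpow_one]
  rw [h1, h2] at key
  have h3 : ((τ:ℝ) - 1) ^ q ≤ (τ:ℝ) - 1 := by
    calc ((τ:ℝ) - 1) ^ q ≤ ((τ:ℝ) - 1) ^ (1:ℝ) :=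
      rpow_le_rpow_of_exponent_le hτ1 hq1
    _ = (τ:ℝ) - 1 := rpow_one _
  have h4 : ((τ:ℝ) - 1) ^ q * v ≤ ((τ:ℝ) - 1) * v := mul_le_mul_of_nonneg_right h3 hv
  have h5 : ((τ:ℝ) - 1) * v ≤ h * v := by
    rw [hh]; nlinarith
  linarith
end

section
/- Let q > 1, let τ ≥ 2 be an integer, and set h := (q+2)·τ^q. Then for all real numbers u, v with 0 ≤ v ≤ u, one has (u^(1/q) + (τ-1)·v^(1/q))^q ≤ u + h·u^(1-1/q)·v^(1/q). -/
open Real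

theorem stmt_5 (q : ℝ) (hq : 1 < q) (τ : ℕ) (hτ : 2 ≤ τ)
    (h : ℝ) (hh : h = (q + 2) * (τ : ℝ) ^ q) (u v : ℝ) (hv : 0 ≤ v) (hvu : v ≤ u) :
    (u ^ (1 / q) + (τ - 1 : ℝ) * v ^ (1 / q)) ^ q ≤ u + h * u ^ (1 - 1 / q) * v ^ (1 / q) := by
  have hq0 : 0 < q := by linarith
  have hu : 0 ≤ u := hv.trans hvu
  have hτ1 : (1:ℝ) ≤ (τ:ℝ) := by exact_mod_cast Nat.one_le_of_lt hτ
  have hτq1 : (1:ℝ) ≤ (τ:ℝ) ^ q := Real.one_le_rpow hτ1 hq0.le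
  rcases eq_or_lt_of_le hu with h0 | hu0
  · have hv0 : v = 0 := le_antisymm (h0 ▸ hvu) hv
    subst hv0
    rw [← h0]
    rw [Real.zero_rpow (by positivity : (1/q) ≠ 0)]
    simp [Real.zero_rpow hq0.ne']
  · set a := u ^ (1/q) with ha
    set b := v ^ (1/q) with hb
    have ha0 : 0 < a := Real.rpow_pos_of_pos hu0 _
    have hb0 : 0 ≤ b := Real.rpow_nonneg hv _
    have hba : b ≤ a := Real.rpow_le_rpow hv hvu (by positivity)
    set t := b / a with ht
    have ht0 : 0 ≤ t := div_nonneg hb0 ha0.le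
    have ht1 : t ≤ 1 := by rw [ht, div_le_one ha0]; exact hba
    have hat : a * t = b := by rw [ht]; field_simp [ha0.ne']
    have key : (1 + ((τ:ℝ) - 1) * t) ^ q ≤ 1 + h * t := by
      have hconv := (convexOn_rpow hq.le).2 (Set.mem_Ici.2 (by norm_num : (0:ℝ) ≤ 1))
        (Set.mem_Ici.2 (by positivity : (0:ℝ) ≤ (τ:ℝ))) (by linarith : (0:ℝ) ≤ 1 - t) ht0
        (by ring)
      simp only [smul_eq_mul, Real.one_rpow] at hconv
      have e : (1 - t) * 1 + t * (τ:ℝ) = 1 + ((τ:ℝ) - 1) * t := by ring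
      rw [e] at hconv
      refine hconv.trans ?_
      have hle : (τ:ℝ)^q - 1 ≤ h := by rw [hh]; nlinarith
      nlinarith
    have haq : a ^ q = u := by
      rw [ha, ← Real.rpow_mul hu, one_div_mul_cancel hq0.ne', Real.rpow_one]
    have hap : u ^ (1 - 1/q) = a ^ (q - 1) := by
      rw [ha, ← Real.rpow_mul hu]
      congr 1
      field_simp
    have haq' : a ^ q = a ^ (q - 1) * a := by
      rw [← Real.rpow_add_one ha0.ne']; ring_nf
    calc (a + ((τ:ℝ) - 1) * b) ^ q = (a * (1 + ((τ:ℝ)-1) * t)) ^ q := by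
          rw [mul_add, mul_one, ← mul_assoc, mul_comm a ((τ:ℝ)-1), mul_assoc, hat]
      _ = a ^ q * (1 + ((τ:ℝ)-1)*t) ^ q := Real.mul_rpow ha0.le (by nlinarith)
      _ ≤ a ^ q * (1 + h * t) := by
          exact mul_le_mul_of_nonneg_left key (Real.rpow_nonneg ha0.le _)
      _ = u + h * u ^ (1 - 1/q) * b := by
          rw [hap, ← haq, haq', ← hat]; ring
end

section
/- Fix q > 0 and an integer τ ≥ 2, and let e := min{1, 1/q} and let h be the constant h := 2τ if q ≤ 1 and h := (q+2)·τ^q if q > 1. Let N ≥ 1 and let δ_0, δ_1, …, δ_{τN-1} be real numbers not all zero. For each n < N let u_n denote the largest and v_n the second largest value among |δ_{τn}|^q, |δ_{τn+1}|^q, …, |δ_{τn+τ-1}|^q. Then |(∑_{n=0}^{N-1} |∑_{i=0}^{τ-1} δ_{τn+i}|^q) / (∑_{n=0}^{N-1} ∑_{i=0}^{τ-1} |δ_{τn+i}|^q) − 1| ≤ h · ((∑_{n=0}^{N-1} v_n) / (∑_{n=0}^{N-1} u_n))^e. -/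
open Real Finset

/-- Gradient inequality for convex rpow: `x ^ p - y ^ p ≤ p * x ^ (p-1) * (x - y)`. -/
lemma aux_grad {x y p : ℝ} (hy : 0 ≤ y) (hxy : y ≤ x) (hp : 1 ≤ p) :
    x ^ p - y ^ p ≤ p * x ^ (p - 1) * (x - y) := by
  rcases eq_or_lt_of_le (hy.trans hxy) with hx0 | hx0
  · have hy0 : y = 0 := le_antisymm (hxy.trans hx0.symm.le) hy
    rw [← hx0, hy0]
    simp [Real.zero_rpow (by positivity : p ≠ 0)]
  · have hs : (-1 : ℝ) ≤ y / x - 1 := by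
      have : 0 ≤ y / x := div_nonneg hy hx0.le
      linarith
    have hb := one_add_mul_self_le_rpow_one_add hs hp
    have h1 : (1 : ℝ) + (y / x - 1) = y / x := by ring
    rw [h1] at hb
    have h2 : (y / x) ^ p = y ^ p / x ^ p := Real.div_rpow hy hx0.le p
    rw [h2] at hb
    have hxp : (0:ℝ) < x ^ p := Real.rpow_pos_of_pos hx0 p
    have hxq : x ^ p = x ^ (p - 1) * x := by
      rw [← Real.rpow_add_one hx0.ne' (p - 1)]; ring_nf
    -- multiply hb by x ^ p
    have hb2 : x ^ p * (1 + p * (y / x - 1)) ≤ y ^ p := by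
      rw [mul_comm]
      calc (1 + p * (y / x - 1)) * x ^ p ≤ y ^ p / x ^ p * x ^ p := by
            exact mul_le_mul_of_nonneg_right hb hxp.le
        _ = y ^ p := by field_simp
    have hxy' : x ^ p * (y / x) = x ^ (p - 1) * y := by
      rw [hxq]; field_simp
    nlinarith [hb2, hxy', hxq]

lemma aux_pair_subadd {x y p : ℝ} (hx : 0 ≤ x) (hy : 0 ≤ y) (hp : 0 ≤ p) (hp1 : p ≤ 1) :
    (x + y) ^ p ≤ x ^ p + y ^ p := by
  lift x to NNReal using hx
  lift y to NNReal using hy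
  have := NNReal.rpow_add_le_add_rpow x y hp hp1
  exact_mod_cast this

lemma aux_sum_subadd {ι : Type*} (s : Finset ι) (f : ι → ℝ) (hf : ∀ i ∈ s, 0 ≤ f i)
    {p : ℝ} (hp : 0 < p) (hp1 : p ≤ 1) :
    (∑ i ∈ s, f i) ^ p ≤ ∑ i ∈ s, f i ^ p := by
  induction s using Finset.cons_induction with
  | empty => simp [Real.zero_rpow hp.ne']
  | cons a s has ih =>
    rw [Finset.sum_cons, Finset.sum_cons]
    have h1 : 0 ≤ ∑ i ∈ s, f i := Finset.sum_nonneg fun i hi => hf i (Finset.mem_cons_of_mem hi)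
    calc (f a + ∑ i ∈ s, f i) ^ p ≤ f a ^ p + (∑ i ∈ s, f i) ^ p :=
          aux_pair_subadd (hf a (Finset.mem_cons_self a s)) h1 hp.le hp1
      _ ≤ f a ^ p + ∑ i ∈ s, f i ^ p := by
          exact add_le_add_right (ih fun i hi => hf i (Finset.mem_cons_of_mem hi)) _

lemma aux_abs_lb {ι : Type*} [DecidableEq ι] {s : Finset ι} {k : ι} (hk : k ∈ s) (d : ι → ℝ) :
    |d k| - ∑ j ∈ s.erase k, |d j| ≤ |∑ j ∈ s, d j| := by
  have hsplit : ∑ j ∈ s, d j = d k + ∑ j ∈ s.erase k, d j := (Finset.add_sum_erase s d hk).symm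
  have h1 : |∑ j ∈ s.erase k, d j| ≤ ∑ j ∈ s.erase k, |d j| := Finset.abs_sum_le_sum_abs _ _
  have h2 : |d k| - |∑ j ∈ s.erase k, d j| ≤ |d k + ∑ j ∈ s.erase k, d j| := by
    have := abs_sub_abs_le_abs_sub (d k) (-(∑ j ∈ s.erase k, d j))
    simp only [abs_neg, sub_neg_eq_add] at this
    exact this
  rw [hsplit]
  linarith

lemma aux_block_le {q : ℝ} (hq : 0 < q) (hq1 : q ≤ 1) {ι : Type*} [DecidableEq ι] (s : Finset ι) (k : ι)
    (hk : k ∈ s) (d : ι → ℝ) {V : ℝ} (hV0 : 0 ≤ V)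
    (hVj : ∀ j ∈ s, j ≠ k → |d j| ^ q ≤ V) :
    |∑ j ∈ s, d j| ^ q ≤ ∑ j ∈ s, |d j| ^ q ∧
    ∑ j ∈ s, |d j| ^ q - |∑ j ∈ s, d j| ^ q ≤ 2 * ((s.card : ℝ) - 1) * V := by
  have hcard : 1 ≤ s.card := Finset.one_le_card.mpr ⟨k, hk⟩
  set B : ℝ := ∑ j ∈ s.erase k, |d j| with hB
  set Bq : ℝ := ∑ j ∈ s.erase k, |d j| ^ q with hBq
  have hB0 : 0 ≤ B := Finset.sum_nonneg fun j _ => abs_nonneg _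
  have hBq0 : 0 ≤ Bq := Finset.sum_nonneg fun j _ => Real.rpow_nonneg (abs_nonneg _) q
  have hsplitq : ∑ j ∈ s, |d j| ^ q = |d k| ^ q + Bq := (Finset.add_sum_erase s _ hk).symm
  have hBqV : Bq ≤ ((s.card : ℝ) - 1) * V := by
    have h1 : Bq ≤ (s.erase k).card • V := by
      refine Finset.sum_le_card_nsmul _ _ _ fun j hj => ?_
      exact hVj j (Finset.mem_of_mem_erase hj) (Finset.ne_of_mem_erase hj)
    rw [Finset.card_erase_of_mem hk, nsmul_eq_mul] at h1
    rwa [Nat.cast_sub hcard, Nat.cast_one] at h1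
  have hBBq : B ^ q ≤ Bq := by
    refine aux_sum_subadd _ _ (fun j _ => abs_nonneg _) hq hq1
  have part1 : |∑ j ∈ s, d j| ^ q ≤ ∑ j ∈ s, |d j| ^ q := by
    calc |∑ j ∈ s, d j| ^ q ≤ (∑ j ∈ s, |d j|) ^ q :=
          Real.rpow_le_rpow (abs_nonneg _) (Finset.abs_sum_le_sum_abs _ _) hq.le
      _ ≤ ∑ j ∈ s, |d j| ^ q := aux_sum_subadd _ _ (fun j _ => abs_nonneg _) hq hq1
  refine ⟨part1, ?_⟩
  have hS0 : 0 ≤ |∑ j ∈ s, d j| ^ q := Real.rpow_nonneg (abs_nonneg _) q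
  rcases le_or_gt B |d k| with hle | hlt
  · have hA : |d k| - B ≤ |∑ j ∈ s, d j| := aux_abs_lb hk d
    have hS : (|d k| - B) ^ q ≤ |∑ j ∈ s, d j| ^ q :=
      Real.rpow_le_rpow (by linarith) hA hq.le
    have hU : |d k| ^ q ≤ (|d k| - B) ^ q + B ^ q := by
      have := aux_pair_subadd (x := |d k| - B) (y := B) (by linarith) hB0 hq.le hq1
      rwa [sub_add_cancel] at this
    rw [hsplitq]; linarith
  · have hU : |d k| ^ q ≤ B ^ q := Real.rpow_le_rpow (abs_nonneg _) hlt.le hq.le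
    rw [hsplitq]; linarith

set_option maxHeartbeats 1000000 in
lemma aux_block_gt {q : ℝ} (hq1 : 1 < q) {ι : Type*} [DecidableEq ι] (s : Finset ι) (k : ι) (hk : k ∈ s)
    (d : ι → ℝ) {M m : ℝ} (hm0 : 0 ≤ m) (hmM : m ≤ M) (hdk : |d k| = M)
    (hdj : ∀ j ∈ s, j ≠ k → |d j| ≤ m) :
    |(|∑ j ∈ s, d j| ^ q) - ∑ j ∈ s, |d j| ^ q| ≤
      (q + 2) * (s.card : ℝ) ^ q * (M ^ (q - 1) * m) := by
  have hq0 : (0:ℝ) < q := by linarith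
  have hM0 : 0 ≤ M := hm0.trans hmM
  have hcard : 1 ≤ s.card := Finset.one_le_card.mpr ⟨k, hk⟩
  set c : ℝ := (s.card : ℝ) with hc
  have hc1 : (1:ℝ) ≤ c := by rw [hc]; exact_mod_cast hcard
  have hc0 : (0:ℝ) < c := by linarith
  set K : ℝ := M ^ (q - 1) * m with hK
  have hMq10 : 0 ≤ M ^ (q - 1) := Real.rpow_nonneg hM0 _
  have hK0 : 0 ≤ K := mul_nonneg hMq10 hm0
  set B : ℝ := ∑ j ∈ s.erase k, |d j| with hB
  have hB0 : 0 ≤ B := Finset.sum_nonneg fun j _ => abs_nonneg _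
  have hBle : B ≤ (c - 1) * m := by
    have h1 : B ≤ (s.erase k).card • m := by
      refine Finset.sum_le_card_nsmul _ _ _ fun j hj => ?_
      exact hdj j (Finset.mem_of_mem_erase hj) (Finset.ne_of_mem_erase hj)
    rw [Finset.card_erase_of_mem hk, nsmul_eq_mul] at h1
    rwa [Nat.cast_sub hcard, Nat.cast_one] at h1
  set A : ℝ := |∑ j ∈ s, d j| with hA
  have hA0 : 0 ≤ A := abs_nonneg _
  have hAub : A ≤ M + (c - 1) * m := by
    have h1 : A ≤ ∑ j ∈ s, |d j| := Finset.abs_sum_le_sum_abs _ _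
    have h2 : ∑ j ∈ s, |d j| = |d k| + B := (Finset.add_sum_erase s _ hk).symm
    rw [h2, hdk] at h1; linarith
  have hAlb : M - (c - 1) * m ≤ A := by
    have := aux_abs_lb hk d
    rw [hdk] at this; linarith
  set T : ℝ := ∑ j ∈ s, |d j| ^ q with hT
  have hsplitq : T = M ^ q + ∑ j ∈ s.erase k, |d j| ^ q := by
    rw [hT, ← Finset.add_sum_erase s _ hk, hdk]
  have hBq0 : 0 ≤ ∑ j ∈ s.erase k, |d j| ^ q :=
    Finset.sum_nonneg fun j _ => Real.rpow_nonneg (abs_nonneg _) q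
  have hBqle : ∑ j ∈ s.erase k, |d j| ^ q ≤ (c - 1) * m ^ q := by
    have h1 : ∑ j ∈ s.erase k, |d j| ^ q ≤ (s.erase k).card • (m ^ q) := by
      refine Finset.sum_le_card_nsmul _ _ _ fun j hj => ?_
      exact Real.rpow_le_rpow (abs_nonneg _)
        (hdj j (Finset.mem_of_mem_erase hj) (Finset.ne_of_mem_erase hj)) hq0.le
    rw [Finset.card_erase_of_mem hk, nsmul_eq_mul] at h1
    rwa [Nat.cast_sub hcard, Nat.cast_one] at h1
  have hTlb : M ^ q ≤ T := by rw [hsplitq]; linarith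
  have hTub : T ≤ M ^ q + (c - 1) * m ^ q := by rw [hsplitq]; linarith
  have hMq : M ^ q = M ^ (q - 1) * M := by
    have h0 : M ^ (q - 1 + 1) = M ^ (q - 1) * M ^ (1:ℝ) := Real.rpow_add' hM0 (by intro h0; exact hq0.ne' (by linarith))
    rw [Real.rpow_one] at h0
    rw [show q - 1 + 1 = q by ring] at h0
    exact h0
  have hmq : m ^ q ≤ K := by
    have h1 : m ^ q = m ^ (q - 1) * m := by
      have h0 : m ^ (q - 1 + 1) = m ^ (q - 1) * m ^ (1:ℝ) := Real.rpow_add' hm0 (by intro h0; exact hq0.ne' (by linarith))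
      rw [Real.rpow_one] at h0
      rw [show q - 1 + 1 = q by ring] at h0
      exact h0
    have h2 : m ^ (q - 1) ≤ M ^ (q - 1) := Real.rpow_le_rpow hm0 hmM (by linarith)
    rw [h1, hK]
    exact mul_le_mul_of_nonneg_right h2 hm0
  have hcq : c ≤ c ^ q := by
    have h0 := Real.rpow_le_rpow_of_exponent_le hc1 hq1.le
    rwa [Real.rpow_one] at h0
  have hcqK : 0 ≤ c ^ q * K := mul_nonneg (Real.rpow_nonneg hc0.le q) hK0
  set X : ℝ := M + (c - 1) * m with hX
  have hX0 : 0 ≤ X := by nlinarith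
  have hupper : A ^ q - T ≤ (q + 2) * c ^ q * K := by
    have hS : A ^ q ≤ X ^ q := Real.rpow_le_rpow hA0 hAub hq0.le
    have hg := aux_grad (x := X) (y := M) hM0 (by rw [hX]; nlinarith) hq1.le
    rw [show X - M = (c - 1) * m by rw [hX]; ring] at hg
    have hxc : X ≤ c * M := by rw [hX]; nlinarith
    have e2 : X ^ (q - 1) ≤ c ^ (q - 1) * M ^ (q - 1) := by
      calc X ^ (q - 1) ≤ (c * M) ^ (q - 1) := Real.rpow_le_rpow hX0 hxc (by linarith)
        _ = c ^ (q - 1) * M ^ (q - 1) := Real.mul_rpow hc0.le hM0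
    have e3 : c ^ (q - 1) * (c - 1) ≤ c ^ q := by
      have h0 := Real.rpow_add_one hc0.ne' (q - 1)
      rw [show q - 1 + 1 = q by ring] at h0
      nlinarith [Real.rpow_nonneg hc0.le (q - 1)]
    have e4 : q * X ^ (q - 1) * ((c - 1) * m) ≤ q * c ^ q * K := by
      have h5 : X ^ (q - 1) * ((c - 1) * m) ≤ c ^ q * K := by
        calc X ^ (q - 1) * ((c - 1) * m) ≤ (c ^ (q - 1) * M ^ (q - 1)) * ((c - 1) * m) := by
              apply mul_le_mul_of_nonneg_right e2 (by nlinarith)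
          _ = (c ^ (q - 1) * (c - 1)) * (M ^ (q - 1) * m) := by ring
          _ ≤ c ^ q * K := by
              rw [hK]; exact mul_le_mul_of_nonneg_right e3 (mul_nonneg hMq10 hm0)
      calc q * X ^ (q - 1) * ((c - 1) * m) = q * (X ^ (q - 1) * ((c - 1) * m)) := by ring
        _ ≤ q * (c ^ q * K) := mul_le_mul_of_nonneg_left h5 hq0.le
        _ = q * c ^ q * K := by ring
    nlinarith
  have hlower : T - A ^ q ≤ (q + 2) * c ^ q * K := by
    rcases le_or_gt ((c - 1) * m) M with hcase | hcase
    · set Y : ℝ := M - (c - 1) * m with hY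
      have hY0 : 0 ≤ Y := by rw [hY]; linarith
      have hYq : Y ^ q ≤ A ^ q := Real.rpow_le_rpow hY0 hAlb hq0.le
      have g2 := aux_grad (x := M) (y := Y) hY0 (by rw [hY]; nlinarith) hq1.le
      rw [show M - Y = (c - 1) * m by rw [hY]; ring] at g2
      have t1 : q * M ^ (q - 1) * ((c - 1) * m) = q * ((c - 1) * K) := by rw [hK]; ring
      have hm1 : (c - 1) * m ^ q ≤ (c - 1) * K := mul_le_mul_of_nonneg_left hmq (by linarith)
      have hstep : T - A ^ q ≤ (q + 1) * ((c - 1) * K) := by nlinarith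
      have h1 : (c - 1) * K ≤ c ^ q * K := mul_le_mul_of_nonneg_right (by linarith) hK0
      nlinarith [mul_le_mul_of_nonneg_left h1 (show (0:ℝ) ≤ q + 1 by linarith)]
    · have hAq0 : 0 ≤ A ^ q := Real.rpow_nonneg hA0 q
      have hMM : M ^ (q - 1) * M ≤ M ^ (q - 1) * ((c - 1) * m) :=
        mul_le_mul_of_nonneg_left hcase.le hMq10
      have t1 : M ^ (q - 1) * ((c - 1) * m) = (c - 1) * K := by rw [hK]; ring
      have hm1 : (c - 1) * m ^ q ≤ (c - 1) * K := mul_le_mul_of_nonneg_left hmq (by linarith)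
      have hstep : T - A ^ q ≤ 2 * ((c - 1) * K) := by nlinarith
      have h1 : (c - 1) * K ≤ c ^ q * K := mul_le_mul_of_nonneg_right (by linarith) hK0
      nlinarith
  rw [abs_sub_le_iff]
  exact ⟨hupper, hlower⟩

set_option maxHeartbeats 1000000 in
theorem stmt_6 (q : ℝ) (hq : 0 < q) (τ : ℕ) (hτ : 2 ≤ τ)
    (e h : ℝ) (he : e = min 1 (1 / q))
    (hh : h = if q ≤ 1 then (2 * τ : ℝ) else (q + 2) * (τ : ℝ) ^ q)
    (N : ℕ) (hN : 1 ≤ N) (δ : ℕ → ℝ) (hδ : ∃ n < τ * N, δ n ≠ 0)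
    (u v : ℕ → ℝ)
    (hu : ∀ n, u n = (Finset.range τ).sup'
      (Finset.nonempty_range_iff.mpr (by omega)) (fun i => |δ (τ * n + i)| ^ q))
    (hv : ∀ n, v n = (Finset.range τ).inf'
      (Finset.nonempty_range_iff.mpr (by omega))
      (fun i => ((Finset.range τ).erase i).sup'
        (Finset.card_pos.mp (lt_of_lt_of_le (by simp [Finset.card_range]; omega)
          Finset.pred_card_le_card_erase))
        (fun j => |δ (τ * n + j)| ^ q))) :
    |(∑ n ∈ Finset.range N, |∑ i ∈ Finset.range τ, δ (τ * n + i)| ^ q) /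
        (∑ n ∈ Finset.range N, ∑ i ∈ Finset.range τ, |δ (τ * n + i)| ^ q) - 1| ≤
      h * ((∑ n ∈ Finset.range N, v n) / (∑ n ∈ Finset.range N, u n)) ^ e := by
  have hτ0 : 0 < τ := by omega
  have hne : (Finset.range τ).Nonempty := Finset.nonempty_range_iff.mpr (by omega)
  have hτR : (2 : ℝ) ≤ (τ : ℝ) := by exact_mod_cast hτ
  -- basic facts about u and v
  have hle_u : ∀ n, ∀ i ∈ Finset.range τ, |δ (τ * n + i)| ^ q ≤ u n := by
    intro n i hi; rw [hu n]; exact Finset.le_sup' (fun i => |δ (τ * n + i)| ^ q) hi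
  have hu0 : ∀ n, 0 ≤ u n := by
    intro n
    exact le_trans (Real.rpow_nonneg (abs_nonneg _) q)
      (hle_u n 0 (Finset.mem_range.mpr hτ0))
  have hvu : ∀ n, v n ≤ u n := by
    intro n
    rw [hv n]
    have h0 : (0:ℕ) ∈ Finset.range τ := Finset.mem_range.mpr hτ0
    refine (Finset.inf'_le _ h0).trans ?_
    refine Finset.sup'_le _ _ fun j hj => ?_
    exact hle_u n j (Finset.mem_of_mem_erase hj)
  have hv0 : ∀ n, 0 ≤ v n := by
    intro n
    rw [hv n]
    refine Finset.le_inf' _ _ fun i hi => ?_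
    have hne2 : ((Finset.range τ).erase i).Nonempty :=
      Finset.card_pos.mp (lt_of_lt_of_le (by simp [Finset.card_range]; omega)
        Finset.pred_card_le_card_erase)
    obtain ⟨j, hj⟩ := hne2
    exact le_trans (Real.rpow_nonneg (abs_nonneg (δ (τ * n + j))) q)
      (Finset.le_sup' (fun j => |δ (τ * n + j)| ^ q) hj)
  -- structure lemma: there is a max index k, all others are ≤ v n
  have key : ∀ n, ∃ k ∈ Finset.range τ, |δ (τ * n + k)| ^ q = u n ∧
      ∀ j ∈ Finset.range τ, j ≠ k → |δ (τ * n + j)| ^ q ≤ v n := by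
    intro n
    obtain ⟨k0, hk0m, hk0⟩ :=
      Finset.exists_mem_eq_sup' hne (fun i => |δ (τ * n + i)| ^ q)
    rcases le_or_gt (u n) (v n) with hcase | hcase
    · exact ⟨k0, hk0m, by rw [hu n, hk0],
        fun j hj _ => (hle_u n j hj).trans hcase⟩
    · obtain ⟨i0, hi0m, hi0⟩ := Finset.exists_mem_eq_inf' hne
        (fun i => ((Finset.range τ).erase i).sup'
          (Finset.card_pos.mp (lt_of_lt_of_le (by simp [Finset.card_range]; omega)
            Finset.pred_card_le_card_erase))
          (fun j => |δ (τ * n + j)| ^ q))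
      have hvn : v n = ((Finset.range τ).erase i0).sup'
          (Finset.card_pos.mp (lt_of_lt_of_le (by simp [Finset.card_range]; omega)
            Finset.pred_card_le_card_erase))
          (fun j => |δ (τ * n + j)| ^ q) := by
        rw [hv n]; exact hi0
      have hbound : ∀ j ∈ Finset.range τ, j ≠ i0 → |δ (τ * n + j)| ^ q ≤ v n := by
        intro j hj hji
        rw [hvn]
        exact Finset.le_sup' (fun j => |δ (τ * n + j)| ^ q) (Finset.mem_erase.mpr ⟨hji, hj⟩)
      have hk0i0 : k0 = i0 := by
        by_contra hne'
        have h1 : |δ (τ * n + k0)| ^ q ≤ v n := hbound k0 hk0m hne'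
        have h2 : u n = |δ (τ * n + k0)| ^ q := by rw [hu n, hk0]
        rw [← h2] at h1
        linarith
      refine ⟨i0, hi0m, ?_, hbound⟩
      rw [← hk0i0, ← hk0, hu n]
  -- sums and positivity
  set S : ℕ → ℝ := fun n => |∑ i ∈ Finset.range τ, δ (τ * n + i)| ^ q with hS
  set T : ℕ → ℝ := fun n => ∑ i ∈ Finset.range τ, |δ (τ * n + i)| ^ q with hT
  have huT : ∀ n, u n ≤ T n := by
    intro n
    obtain ⟨k, hkm, hkeq, -⟩ := key n
    rw [← hkeq, hT]
    exact Finset.single_le_sum (f := fun i => |δ (τ * n + i)| ^ q)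
      (fun i _ => Real.rpow_nonneg (abs_nonneg _) q) hkm
  have hUpos : 0 < ∑ n ∈ Finset.range N, u n := by
    obtain ⟨n0, hn0, hd0⟩ := hδ
    have hb : n0 / τ < N := Nat.div_lt_of_lt_mul (by omega)
    have hub : 0 < u (n0 / τ) := by
      have hi : n0 % τ ∈ Finset.range τ := Finset.mem_range.mpr (Nat.mod_lt _ hτ0)
      have := hle_u (n0 / τ) (n0 % τ) hi
      rw [Nat.div_add_mod n0 τ] at this
      exact lt_of_lt_of_le (Real.rpow_pos_of_pos (abs_pos.mpr hd0) q) this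
    exact Finset.sum_pos' (fun n _ => hu0 n) ⟨n0 / τ, Finset.mem_range.mpr hb, hub⟩
  have hUT : ∑ n ∈ Finset.range N, u n ≤ ∑ n ∈ Finset.range N, T n :=
    Finset.sum_le_sum fun n _ => huT n
  have hTpos : 0 < ∑ n ∈ Finset.range N, T n := lt_of_lt_of_le hUpos hUT
  have hVnn : 0 ≤ ∑ n ∈ Finset.range N, v n := Finset.sum_nonneg fun n _ => hv0 n
  set Stot := ∑ n ∈ Finset.range N, S n with hStot
  set Ttot := ∑ n ∈ Finset.range N, T n with hTtot
  set Utot := ∑ n ∈ Finset.range N, u n with hUtot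
  set Vtot := ∑ n ∈ Finset.range N, v n with hVtot
  rw [div_sub_one hTpos.ne', abs_div, abs_of_pos hTpos]
  rcases le_or_gt q 1 with hq1 | hq1
  · -- case q ≤ 1
    have he1 : e = 1 := by rw [he]; exact min_eq_left (one_le_one_div hq hq1)
    rw [he1, Real.rpow_one, hh, if_pos hq1]
    have hdiff : ∀ n ∈ Finset.range N, S n ≤ T n ∧ T n - S n ≤ 2 * ((τ:ℝ) - 1) * v n := by
      intro n _
      obtain ⟨k, hkm, hkeq, hkv⟩ := key n
      have := aux_block_le hq hq1 (Finset.range τ) k hkm (fun i => δ (τ * n + i))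
        (hv0 n) hkv
      simpa [Finset.card_range] using this
    have hsum1 : Stot ≤ Ttot := Finset.sum_le_sum fun n hn => (hdiff n hn).1
    have hsum2 : Ttot - Stot ≤ 2 * ((τ:ℝ) - 1) * Vtot := by
      rw [hTtot, hStot, ← Finset.sum_sub_distrib, hVtot, Finset.mul_sum]
      exact Finset.sum_le_sum fun n hn => (hdiff n hn).2
    have hsum2' : Ttot - Stot ≤ 2 * (τ:ℝ) * Vtot := by nlinarith
    have habs : |Stot - Ttot| = Ttot - Stot := by rw [abs_sub_comm]; exact abs_of_nonneg (by linarith)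
    rw [habs]
    calc (Ttot - Stot) / Ttot ≤ (2 * (τ:ℝ) * Vtot) / Ttot := by
          gcongr
      _ ≤ (2 * (τ:ℝ) * Vtot) / Utot := by
          have hnum : 0 ≤ 2 * (τ:ℝ) * Vtot := by positivity
          exact div_le_div_of_nonneg_left hnum hUpos hUT
      _ = 2 * (τ:ℝ) * (Vtot / Utot) := by ring
  · -- case q > 1
    have he1 : e = 1 / q := by
      rw [he]; exact min_eq_right ((div_le_one hq).mpr hq1.le)
    rw [he1, hh, if_neg (not_le.mpr hq1)]
    have hq0' : q ≠ 0 := hq.ne'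
    have hq10 : q - 1 ≠ 0 := sub_ne_zero.mpr hq1.ne'
    have hcancel : ∀ x : ℝ, 0 ≤ x → (x ^ q) ^ (1 / q) = x := by
      intro x hx
      rw [← Real.rpow_mul hx, mul_one_div, div_self hq0', Real.rpow_one]
    have hblk : ∀ n ∈ Finset.range N,
        |S n - T n| ≤ (q + 2) * (τ:ℝ) ^ q * (u n ^ ((q - 1) / q) * v n ^ (1 / q)) := by
      intro n _
      obtain ⟨k, hkm, hkeq, hkv⟩ := key n
      have hMn : |δ (τ * n + k)| = u n ^ (1 / q) := by
        rw [← hkeq, hcancel _ (abs_nonneg _)]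
      have hm0 : 0 ≤ v n ^ (1 / q) := Real.rpow_nonneg (hv0 n) _
      have hmM : v n ^ (1 / q) ≤ u n ^ (1 / q) :=
        Real.rpow_le_rpow (hv0 n) (hvu n) (by positivity)
      have hdj : ∀ j ∈ Finset.range τ, j ≠ k → |δ (τ * n + j)| ≤ v n ^ (1 / q) := by
        intro j hj hjk
        have h2 := Real.rpow_le_rpow (Real.rpow_nonneg (abs_nonneg _) q)
          (hkv j hj hjk) (by positivity : (0:ℝ) ≤ 1 / q)
        rwa [hcancel _ (abs_nonneg _)] at h2
      have hb := aux_block_gt hq1 (Finset.range τ) k hkm (fun i => δ (τ * n + i))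
        hm0 hmM hMn hdj
      rw [Finset.card_range] at hb
      have hMid : (u n ^ (1 / q)) ^ (q - 1) = u n ^ ((q - 1) / q) := by
        rw [← Real.rpow_mul (hu0 n)]
        congr 1
        ring
      rw [hMid] at hb
      simp only [hS, hT]
      simpa using hb
    have habs : |Stot - Ttot| ≤ ∑ n ∈ Finset.range N, |S n - T n| := by
      rw [hStot, hTtot, ← Finset.sum_sub_distrib]
      exact Finset.abs_sum_le_sum_abs _ _
    have hsum : ∑ n ∈ Finset.range N, |S n - T n| ≤
        (q + 2) * (τ:ℝ) ^ q * ∑ n ∈ Finset.range N, u n ^ ((q - 1) / q) * v n ^ (1 / q) := by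
      rw [Finset.mul_sum]
      exact Finset.sum_le_sum hblk
    have hconj : (q / (q - 1)).HolderConjugate q :=
      ((Real.holderConjugate_iff_eq_conjExponent hq1).mpr rfl).symm
    have hHold := Real.inner_le_Lp_mul_Lq_of_nonneg (s := Finset.range N) hconj
      (f := fun n => u n ^ ((q - 1) / q)) (g := fun n => v n ^ (1 / q))
      (fun n _ => Real.rpow_nonneg (hu0 n) _) (fun n _ => Real.rpow_nonneg (hv0 n) _)
    have e1 : ∀ n, (u n ^ ((q - 1) / q)) ^ (q / (q - 1)) = u n := by
      intro n
      rw [← Real.rpow_mul (hu0 n), show (q - 1) / q * (q / (q - 1)) = 1 by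
        field_simp, Real.rpow_one]
    have e2 : ∀ n, (v n ^ (1 / q)) ^ q = v n := by
      intro n
      rw [← Real.rpow_mul (hv0 n), one_div_mul_cancel hq0', Real.rpow_one]
    have hHold2 : ∑ n ∈ Finset.range N, u n ^ ((q - 1) / q) * v n ^ (1 / q) ≤
        Utot ^ ((q - 1) / q) * Vtot ^ (1 / q) := by
      refine le_trans hHold (le_of_eq ?_)
      congr 1
      · rw [one_div_div]
        congr 1
        rw [hUtot]
        exact Finset.sum_congr rfl fun n _ => e1 n
      · congr 1
        rw [hVtot]
        exact Finset.sum_congr rfl fun n _ => e2 n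
    have hUa : (0:ℝ) < Utot ^ ((q - 1) / q) := Real.rpow_pos_of_pos hUpos _
    have hUb : (0:ℝ) < Utot ^ (1 / q) := Real.rpow_pos_of_pos hUpos _
    have hUsplit : Utot ^ ((q - 1) / q) * Utot ^ (1 / q) = Utot := by
      rw [← Real.rpow_add hUpos, show (q - 1) / q + 1 / q = 1 by field_simp; ring, Real.rpow_one]
    have hnum : |Stot - Ttot| ≤
        (q + 2) * (τ:ℝ) ^ q * (Utot ^ ((q - 1) / q) * Vtot ^ (1 / q)) := by
      refine le_trans habs (le_trans hsum ?_)
      exact mul_le_mul_of_nonneg_left hHold2 (by positivity)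
    calc |Stot - Ttot| / Ttot
        ≤ ((q + 2) * (τ:ℝ) ^ q * (Utot ^ ((q - 1) / q) * Vtot ^ (1 / q))) / Utot :=
          div_le_div₀ (by positivity) hnum hUpos hUT
      _ = ((q + 2) * (τ:ℝ) ^ q * (Utot ^ ((q - 1) / q) * Vtot ^ (1 / q))) /
            (Utot ^ ((q - 1) / q) * Utot ^ (1 / q)) := by rw [hUsplit]
      _ = (q + 2) * (τ:ℝ) ^ q * (Vtot ^ (1 / q) / Utot ^ (1 / q)) := by
          field_simp
      _ = (q + 2) * (τ:ℝ) ^ q * ((Vtot / Utot) ^ (1 / q)) := by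
          rw [Real.div_rpow hVnn hUpos.le]
end

section
/- Let U be a nonnegative random variable on a probability space such that x^β · P[U > x] → L as x → ∞, for some constants 0 < β < 1 and L > 0. Then there exist constants δ > 0 and η > 0 such that E[exp(−ξU)] ≤ exp(−δ·ξ^β) for all 0 < ξ ≤ η. -/
open MeasureTheory Real Filter

theorem stmt_8 {Ω : Type*} [MeasurableSpace Ω] (μ : Measure Ω) [IsProbabilityMeasure μ]
    (U : Ω → ℝ) (hmeas : Measurable U) (hnonneg : ∀ ω, 0 ≤ U ω)
    (β L : ℝ) (hβ0 : 0 < β) (hβ1 : β < 1) (hL : 0 < L)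
    (htail : Tendsto (fun x : ℝ => x ^ β * (μ {ω | x < U ω}).toReal) atTop (nhds L)) :
    ∃ δ > (0 : ℝ), ∃ η > (0 : ℝ), ∀ ξ : ℝ, 0 < ξ → ξ ≤ η →
      ∫ ω, Real.exp (-ξ * U ω) ∂μ ≤ Real.exp (-δ * ξ ^ β) := by
  have hc : (0:ℝ) < 1 - Real.exp (-1) := by
    have h : Real.exp (-1) < 1 := Real.exp_lt_one_iff.mpr (by norm_num)
    linarith
  set c : ℝ := 1 - Real.exp (-1) with hcdef
  have hev : ∀ᶠ x in atTop, L/2 ≤ x ^ β * (μ {ω | x < U ω}).toReal :=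
    htail.eventually (eventually_ge_nhds (by linarith))
  obtain ⟨x0, hx0⟩ := hev.exists_forall_of_atTop
  set x1 : ℝ := max x0 1 with hx1def
  have hx1pos : (0:ℝ) < x1 := lt_of_lt_of_le one_pos (le_max_right _ _)
  refine ⟨c * (L/2), by positivity, 1/x1, by positivity, ?_⟩
  intro ξ hξ hξη
  set A : Set Ω := {ω | 1/ξ < U ω} with hAdef
  have hA : MeasurableSet A := measurableSet_lt measurable_const hmeas
  have hx1le : x1 ≤ 1/ξ := by
    rw [le_div_iff₀ hξ]
    calc x1 * ξ ≤ x1 * (1/x1) := by nlinarith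
    _ = 1 := by field_simp
  have hP : L/2 * ξ ^ β ≤ (μ A).toReal := by
    have h1 := hx0 (1/ξ) (le_trans (le_max_left _ _) hx1le)
    have hinv : (1/ξ) ^ β = (ξ ^ β)⁻¹ := by
      rw [one_div, Real.inv_rpow hξ.le]
    have hξβ : (0:ℝ) < ξ ^ β := Real.rpow_pos_of_pos hξ β
    rw [hinv, inv_mul_eq_div, le_div_iff₀ hξβ] at h1
    exact h1
  -- integrability
  have hintexp : Integrable (fun ω => Real.exp (-ξ * U ω)) μ := by
    apply (integrable_const (1:ℝ)).mono'
    · exact (Real.measurable_exp.comp (measurable_const.mul hmeas)).aestronglyMeasurable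
    · filter_upwards with ω
      rw [Real.norm_eq_abs, abs_of_pos (Real.exp_pos _)]
      exact Real.exp_le_one_iff.mpr (by nlinarith [hnonneg ω])
  have hindint : Integrable (A.indicator fun _ => (1:ℝ)) μ :=
    (integrable_const (1:ℝ)).indicator hA
  have hintf : Integrable (fun ω => 1 - c * A.indicator (fun _ => (1:ℝ)) ω) μ :=
    (integrable_const (1:ℝ)).sub (hindint.const_mul c)
  have hmono : ∫ ω, Real.exp (-ξ * U ω) ∂μ
      ≤ ∫ ω, (1 - c * A.indicator (fun _ => (1:ℝ)) ω) ∂μ := by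
    refine integral_mono hintexp hintf ?_
    intro ω
    show Real.exp (-ξ * U ω) ≤ 1 - c * A.indicator (fun _ => (1:ℝ)) ω
    by_cases hω : ω ∈ A
    · rw [Set.indicator_of_mem hω]
      have hU : 1/ξ < U ω := hω
      have : (1:ℝ) ≤ ξ * U ω := by
        rw [div_lt_iff₀ hξ] at hU
        nlinarith
      calc Real.exp (-ξ * U ω) ≤ Real.exp (-1) := by
            apply Real.exp_le_exp.mpr; linarith
        _ = 1 - c * 1 := by rw [hcdef]; ring
    · rw [Set.indicator_of_notMem hω]
      simp only [mul_zero, sub_zero]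
      exact Real.exp_le_one_iff.mpr (by nlinarith [hnonneg ω])
  have hcalc : ∫ ω, (1 - c * A.indicator (fun _ => (1:ℝ)) ω) ∂μ
      = 1 - c * (μ A).toReal := by
    rw [integral_sub (integrable_const 1) (hindint.const_mul c),
      integral_const, integral_const_mul, integral_indicator_const _ hA]
    simp [Measure.real]
  have hfinal : 1 - c * (μ A).toReal ≤ Real.exp (-(c * (L/2)) * ξ ^ β) := by
    have h2 : -(c * (L/2)) * ξ ^ β + 1 ≤ Real.exp (-(c * (L/2)) * ξ ^ β) :=
      Real.add_one_le_exp _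
    nlinarith [hP, hc]
  calc ∫ ω, Real.exp (-ξ * U ω) ∂μ
      ≤ ∫ ω, (1 - c * A.indicator (fun _ => (1:ℝ)) ω) ∂μ := hmono
    _ = 1 - c * (μ A).toReal := hcalc
    _ ≤ Real.exp (-(c * (L/2)) * ξ ^ β) := hfinal
end

section
/- Let U be a nonnegative random variable on a probability space such that x · P[U > x] → L as x → ∞ for some constant L > 0. Then there exist constants δ > 0 and η > 0 such that E[exp(−ξU)] ≤ exp(δ·ξ·ln ξ) for all 0 < ξ ≤ η. -/
set_option maxHeartbeats 1000000


open MeasureTheory Real Filter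

theorem stmt_9 {Ω : Type*} [MeasurableSpace Ω] (μ : Measure Ω) [IsProbabilityMeasure μ]
    (U : Ω → ℝ) (hmeas : Measurable U) (hnonneg : ∀ ω, 0 ≤ U ω)
    (L : ℝ) (hL : 0 < L)
    (htail : Tendsto (fun x : ℝ => x * (μ {ω | x < U ω}).toReal) atTop (nhds L)) :
    ∃ δ > (0 : ℝ), ∃ η > (0 : ℝ), ∀ ξ : ℝ, 0 < ξ → ξ ≤ η →
      ∫ ω, Real.exp (-ξ * U ω) ∂μ ≤ Real.exp (δ * ξ * Real.log ξ) := by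
  -- tail lower bound threshold
  obtain ⟨x1, hx1⟩ := eventually_atTop.mp
    (htail.eventually_const_le (by linarith : L / 2 < L))
  set x0 : ℝ := max x1 1 with hx0def
  have hx0_one : (1 : ℝ) ≤ x0 := le_max_right _ _
  have hx0_pos : (0 : ℝ) < x0 := lt_of_lt_of_le one_pos hx0_one
  refine ⟨L / (4 * Real.exp 1), by positivity, 1 / (2 * x0 ^ 2), by positivity, ?_⟩
  intro ξ hξ hξη
  set δ : ℝ := L / (4 * Real.exp 1) with hδdef
  -- basic consequences
  have hinv : 2 * x0 ^ 2 ≤ 1 / ξ := by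
    rw [le_div_iff₀ hξ]
    calc 2 * x0 ^ 2 * ξ ≤ 2 * x0 ^ 2 * (1 / (2 * x0 ^ 2)) := by
          apply mul_le_mul_of_nonneg_left hξη (by positivity)
      _ = 1 := by field_simp
  have hx0_lt : x0 < 1 / ξ := by nlinarith [sq_nonneg (x0 - 1)]
  -- layer cake
  have g_int : ∀ t > (0:ℝ), IntervalIntegrable (fun t => ξ * Real.exp (-ξ * t)) volume 0 t :=
    fun t _ => (Continuous.intervalIntegrable (by continuity) 0 t)
  have hlc := lintegral_comp_eq_lintegral_meas_lt_mul μ (ae_of_all _ hnonneg)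
    hmeas.aemeasurable g_int
    (ae_of_all _ (fun t => by positivity))
  have hinner : ∀ u : ℝ, (∫ t in (0:ℝ)..u, ξ * Real.exp (-ξ * t)) = 1 - Real.exp (-ξ * u) := by
    intro u
    have hderiv : ∀ t ∈ Set.uIcc (0:ℝ) u,
        HasDerivAt (fun t => -Real.exp (-ξ * t)) (ξ * Real.exp (-ξ * t)) t := by
      intro t _
      have h1 : HasDerivAt (fun t : ℝ => -ξ * t) (-ξ) t := by
        simpa using (hasDerivAt_id t).const_mul (-ξ)
      have := (h1.exp).neg
      simp [mul_comm, mul_assoc, mul_left_comm] at this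
      simp only [Pi.neg_def] at this
      simpa [mul_comm, mul_assoc, mul_left_comm] using this
    have := intervalIntegral.integral_eq_sub_of_hasDerivAt hderiv
      (Continuous.intervalIntegrable (by continuity) 0 u)
    simp only [neg_mul, mul_zero, neg_zero, Real.exp_zero] at this ⊢
    linarith [this]
  simp_rw [hinner] at hlc
  -- lower bound for the RHS of layer cake
  set c : ℝ := L * ξ * Real.exp (-1) / 2 with hcdef
  have hc_nonneg : 0 ≤ c := by positivity
  have hpoint : ∀ t ∈ Set.Ioc x0 (1/ξ),
      ENNReal.ofReal (c * (1 / t)) ≤ μ {a | t < U a} * ENNReal.ofReal (ξ * Real.exp (-ξ * t)) := by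
    intro t ht
    obtain ⟨ht1, ht2⟩ := ht
    have ht_pos : 0 < t := lt_trans hx0_pos ht1
    have htail_t : L / 2 ≤ t * (μ {ω | t < U ω}).toReal :=
      hx1 t (le_trans (le_max_left _ _) ht1.le)
    have hμt : ENNReal.ofReal (L / (2 * t)) ≤ μ {a | t < U a} := by
      rw [← ENNReal.ofReal_toReal (measure_ne_top μ {a | t < U a})]
      apply ENNReal.ofReal_le_ofReal
      rw [div_le_iff₀ (by positivity)]
      nlinarith
    have hexp : Real.exp (-1) ≤ Real.exp (-ξ * t) := by
      apply Real.exp_le_exp.mpr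
      have : ξ * t ≤ 1 := by
        rw [← le_div_iff₀' hξ]; exact ht2
      linarith
    calc ENNReal.ofReal (c * (1 / t))
        = ENNReal.ofReal (L / (2 * t) * (ξ * Real.exp (-1))) := by
          congr 1; rw [hcdef]; field_simp
      _ = ENNReal.ofReal (L / (2 * t)) * ENNReal.ofReal (ξ * Real.exp (-1)) := by
          rw [ENNReal.ofReal_mul (by positivity)]
      _ ≤ μ {a | t < U a} * ENNReal.ofReal (ξ * Real.exp (-ξ * t)) := by
          apply mul_le_mul' hμt
          exact ENNReal.ofReal_le_ofReal (by nlinarith [Real.exp_pos (-1)])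
  have hB : ENNReal.ofReal (c * (Real.log (1/ξ) - Real.log x0))
      ≤ ∫⁻ t in Set.Ioi 0, μ {a | t < U a} * ENNReal.ofReal (ξ * Real.exp (-ξ * t)) := by
    have hsub : Set.Ioc x0 (1/ξ) ⊆ Set.Ioi (0:ℝ) :=
      fun t ht => lt_trans hx0_pos ht.1
    calc ENNReal.ofReal (c * (Real.log (1/ξ) - Real.log x0))
        = ∫⁻ t in Set.Ioc x0 (1/ξ), ENNReal.ofReal (c * (1 / t)) := by
          rw [← ofReal_integral_eq_lintegral_ofReal]
          · congr 1
            rw [← intervalIntegral.integral_of_le hx0_lt.le]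
            rw [intervalIntegral.integral_const_mul]
            rw [integral_one_div (by
              intro h
              have h0 : (0:ℝ) < 1/ξ := by positivity
              rcases Set.mem_uIcc.mp h with h' | h' <;> linarith [h'.1, h'.2])]
            have hlog : Real.log (1/ξ/x0) = Real.log (1/ξ) - Real.log x0 :=
              Real.log_div (by positivity) (by positivity)
            rw [hlog]
          · apply (ContinuousOn.integrableOn_Icc ?_).mono_set Set.Ioc_subset_Icc_self
            apply ContinuousOn.mul continuousOn_const
            apply ContinuousOn.div continuousOn_const continuousOn_id
            intro x hx h
            simp only [id_eq] at h
            have := hx.1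
            linarith
          · filter_upwards [self_mem_ae_restrict measurableSet_Ioc] with t ht
            have : 0 < t := lt_trans hx0_pos ht.1
            positivity
      _ ≤ ∫⁻ t in Set.Ioc x0 (1/ξ),
            μ {a | t < U a} * ENNReal.ofReal (ξ * Real.exp (-ξ * t)) := by
          apply setLIntegral_mono' measurableSet_Ioc hpoint
      _ ≤ ∫⁻ t in Set.Ioi 0, μ {a | t < U a} * ENNReal.ofReal (ξ * Real.exp (-ξ * t)) :=
          lintegral_mono_set hsub
  rw [← hlc] at hB
  -- relate to the real integral
  have hexple : ∀ ω, Real.exp (-ξ * U ω) ≤ 1 := by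
    intro ω
    rw [← Real.exp_zero]
    apply Real.exp_le_exp.mpr
    nlinarith [hnonneg ω]
  have hint_exp : Integrable (fun ω => Real.exp (-ξ * U ω)) μ := by
    apply Integrable.mono' (integrable_const (1:ℝ))
      ((hmeas.const_mul (-ξ)).exp.aestronglyMeasurable)
    filter_upwards with ω
    rw [Real.norm_eq_abs, abs_of_nonneg (Real.exp_nonneg _)]
    exact hexple ω
  have hJeq : ∫ ω, (1 - Real.exp (-ξ * U ω)) ∂μ
      = (∫⁻ ω, ENNReal.ofReal (1 - Real.exp (-ξ * U ω)) ∂μ).toReal := by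
    apply integral_eq_lintegral_of_nonneg_ae
    · filter_upwards with ω
      simp only [Pi.zero_apply]
      linarith [hexple ω]
    · exact ((measurable_const.sub (hmeas.const_mul (-ξ)).exp).aestronglyMeasurable)
  have hfin : ∫⁻ ω, ENNReal.ofReal (1 - Real.exp (-ξ * U ω)) ∂μ ≠ ⊤ := by
    apply ne_top_of_le_ne_top (by simp : (1:ENNReal) ≠ ⊤)
    calc ∫⁻ ω, ENNReal.ofReal (1 - Real.exp (-ξ * U ω)) ∂μ
        ≤ ∫⁻ _, (1:ENNReal) ∂μ := by
          refine lintegral_mono fun ω => ?_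
          calc ENNReal.ofReal (1 - Real.exp (-ξ * U ω)) ≤ ENNReal.ofReal 1 :=
                ENNReal.ofReal_le_ofReal (by linarith [Real.exp_pos (-ξ * U ω)])
            _ = 1 := ENNReal.ofReal_one
      _ = 1 := by simp
  have hJge : c * (Real.log (1/ξ) - Real.log x0) ≤ ∫ ω, (1 - Real.exp (-ξ * U ω)) ∂μ := by
    rw [hJeq]
    calc c * (Real.log (1/ξ) - Real.log x0)
        ≤ (ENNReal.ofReal (c * (Real.log (1/ξ) - Real.log x0))).toReal := by
          rw [ENNReal.toReal_ofReal_eq_iff.mpr]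
          have := Real.log_le_log hx0_pos hx0_lt.le
          exact mul_nonneg hc_nonneg (by linarith)
      _ ≤ _ := ENNReal.toReal_mono hfin hB
  -- final arithmetic
  have hsplit : ∫ ω, (1 - Real.exp (-ξ * U ω)) ∂μ
      = 1 - ∫ ω, Real.exp (-ξ * U ω) ∂μ := by
    rw [integral_sub (integrable_const 1) hint_exp]
    simp
  rw [hsplit] at hJge
  have hlogx0 : 0 ≤ Real.log x0 := Real.log_nonneg hx0_one
  have hlog2 : 2 * Real.log x0 ≤ Real.log (1/ξ) := by
    have h1 : Real.log (2 * x0^2) ≤ Real.log (1/ξ) := Real.log_le_log (by positivity) hinv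
    have h2 : Real.log (2 * x0^2) = Real.log 2 + 2 * Real.log x0 := by
      rw [Real.log_mul (by norm_num) (by positivity), Real.log_pow]
      push_cast; ring
    nlinarith [Real.log_nonneg (by norm_num : (1:ℝ) ≤ 2)]
  have hloginv : Real.log (1/ξ) = -Real.log ξ := by rw [one_div, Real.log_inv]
  have heq : c / 2 = δ * ξ := by
    rw [hcdef, hδdef, Real.exp_neg]
    field_simp
    ring
  have hmain : -(δ * ξ * Real.log ξ) ≤ c * (Real.log (1/ξ) - Real.log x0) := by
    have h3 : -(δ * ξ * Real.log ξ) = (c/2) * Real.log (1/ξ) := by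
      rw [heq, hloginv]; ring
    nlinarith [hc_nonneg, hlog2]
  have key : δ * ξ * Real.log ξ + 1 ≤ Real.exp (δ * ξ * Real.log ξ) :=
    Real.add_one_le_exp _
  linarith
end

section
/- Let X be a real random variable such that there exist constants 0 < α < 2, c > 0, d > 0 with |P[|X| > x] − c/x^α| ≤ d/x^{2α} for all x ≥ 1. Then the limit as N → ∞ of E[N·sin(|X|^α/N)] − c·ln N exists and is finite, and equals ∫₀¹ P[|X|^α > x] dx + ∫₁^∞ (P[|X|^α > x] − c/x) dx + c·(∫₀¹ (cos x − 1)/x dx + ∫₁^∞ (cos x)/x dx). -/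
open MeasureTheory Real Filter

lemma sin_sq_integrable : IntegrableOn (fun x => Real.sin x / x^2) (Set.Ioi 1) := by
  have h : IntegrableOn (fun x : ℝ => x ^ (-2 : ℝ)) (Set.Ioi 1) :=
    integrableOn_Ioi_rpow_of_lt (by norm_num) one_pos
  refine Integrable.mono' h ?_ ?_
  · exact ((Real.measurable_sin.div (measurable_id.pow_const 2)).aestronglyMeasurable)
  · filter_upwards [ae_restrict_mem measurableSet_Ioi] with x hx
    have hx1 : (1:ℝ) < x := hx
    have hx0 : (0:ℝ) < x := lt_trans one_pos hx1
    have h2 : x ^ (-2:ℝ) = 1 / x^2 := by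
      rw [Real.rpow_neg hx0.le, Real.rpow_two, one_div]
    rw [h2, Real.norm_eq_abs, abs_div, abs_of_nonneg (by positivity : (0:ℝ) ≤ x^2)]
    exact div_le_div_of_nonneg_right (Real.abs_sin_le_one x) (by positivity) |>.trans_eq rfl

lemma exists_I : ∃ I : ℝ, Tendsto (fun T : ℝ => ∫ x in (1 : ℝ)..T, Real.cos x / x) atTop (nhds I) := by
  refine ⟨(∫ x in Set.Ioi (1:ℝ), Real.sin x / x^2) - Real.sin 1, ?_⟩
  have key : ∀ T : ℝ, 1 ≤ T → ∫ x in (1:ℝ)..T, Real.cos x / x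
      = Real.sin T / T - Real.sin 1 + ∫ x in (1:ℝ)..T, Real.sin x / x^2 := by
    intro T hT
    have hder : ∀ x ∈ Set.uIcc (1:ℝ) T, HasDerivAt (fun y => Real.sin y / y)
        (Real.cos x / x - Real.sin x / x^2) x := by
      intro x hx
      have hx0 : x ≠ 0 := by
        rcases Set.mem_uIcc.mp hx with h | h
        · linarith [h.1]
        · nlinarith [h.1, h.2]
      have := (Real.hasDerivAt_sin x).div (hasDerivAt_id x) hx0
      refine this.congr_deriv ?_
      simp only [id_eq]
      field_simp
    have hcont : ContinuousOn (fun x => Real.cos x / x - Real.sin x / x^2) (Set.uIcc 1 T) := by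
      apply ContinuousOn.sub
      · exact Real.continuous_cos.continuousOn.div continuousOn_id fun x hx => by
          rcases Set.mem_uIcc.mp hx with h | h
          · intro h0; rw [show x = id x from rfl, h0] at h; (try simp only [id_eq] at h); linarith [h.1]
          · intro h0; rw [show x = id x from rfl, h0] at h; (try simp only [id_eq] at h); nlinarith [h.1, h.2]
      · exact Real.continuous_sin.continuousOn.div (continuousOn_pow 2) fun x hx => by
          rcases Set.mem_uIcc.mp hx with h | h
          · intro h0; nlinarith [h.1, sq_nonneg x, pow_eq_zero_iff (n:=2) (by norm_num) |>.mp h0]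
          · intro h0; nlinarith [h.1, h.2, pow_eq_zero_iff (n:=2) (by norm_num) |>.mp h0]
    have := intervalIntegral.integral_eq_sub_of_hasDerivAt hder
      (hcont.intervalIntegrable)
    have hsplit : ∫ x in (1:ℝ)..T, (Real.cos x / x - Real.sin x / x^2)
        = (∫ x in (1:ℝ)..T, Real.cos x / x) - ∫ x in (1:ℝ)..T, Real.sin x / x^2 := by
      apply intervalIntegral.integral_sub
      · exact (Real.continuous_cos.continuousOn.div continuousOn_id fun x hx => by
          rcases Set.mem_uIcc.mp hx with h | h
          · intro h0; rw [show x = id x from rfl, h0] at h; (try simp only [id_eq] at h); linarith [h.1]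
          · intro h0; rw [show x = id x from rfl, h0] at h; (try simp only [id_eq] at h); nlinarith [h.1, h.2]).intervalIntegrable
      · exact (Real.continuous_sin.continuousOn.div (continuousOn_pow 2) fun x hx => by
          rcases Set.mem_uIcc.mp hx with h | h
          · intro h0; nlinarith [h.1, pow_eq_zero_iff (n:=2) (by norm_num) |>.mp h0]
          · intro h0; nlinarith [h.1, h.2, pow_eq_zero_iff (n:=2) (by norm_num) |>.mp h0]).intervalIntegrable
    rw [hsplit, div_one] at this
    linarith [this]
  have h1 : Tendsto (fun T : ℝ => Real.sin T / T) atTop (nhds 0) := by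
    apply squeeze_zero_norm' ?_ tendsto_inv_atTop_zero
    filter_upwards [eventually_ge_atTop (1:ℝ)] with T hT
    rw [Real.norm_eq_abs, abs_div, abs_of_nonneg (by linarith : (0:ℝ) ≤ T)]
    rw [inv_eq_one_div]
    exact div_le_div_of_nonneg_right (Real.abs_sin_le_one T) (by linarith)
  have h2 := (h1.sub_const (Real.sin 1)).add
    (intervalIntegral_tendsto_integral_Ioi 1 sin_sq_integrable tendsto_id)
  rw [zero_sub] at h2
  have h3 : -Real.sin 1 + (∫ x in Set.Ioi (1:ℝ), Real.sin x / x^2)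
      = (∫ x in Set.Ioi (1:ℝ), Real.sin x / x^2) - Real.sin 1 := by ring
  rw [h3] at h2
  apply h2.congr'
  filter_upwards [eventually_ge_atTop (1:ℝ)] with T hT
  rw [key T hT]; simp only [id_eq]

theorem stmt_14 {Ω : Type*} [MeasurableSpace Ω] (μ : Measure Ω) [IsProbabilityMeasure μ]
    (X : Ω → ℝ) (hmeas : Measurable X)
    (α c d : ℝ) (hα0 : 0 < α) (hα2 : α < 2) (hc : 0 < c) (hd : 0 < d)
    (htail : ∀ x : ℝ, 1 ≤ x →
      |(μ {ω | x < |X ω|}).toReal - c / x ^ α| ≤ d / x ^ (2 * α)) :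
    ∃ I : ℝ,
      Tendsto (fun T : ℝ => ∫ x in (1 : ℝ)..T, Real.cos x / x) atTop (nhds I) ∧
      Tendsto (fun N : ℕ =>
          (∫ ω, (N : ℝ) * Real.sin (|X ω| ^ α / N) ∂μ) - c * Real.log N) atTop
        (nhds ((∫ x in (0 : ℝ)..1, (μ {ω | x < |X ω| ^ α}).toReal) +
          (∫ x in Set.Ioi (1 : ℝ), ((μ {ω | x < |X ω| ^ α}).toReal - c / x)) +
          c * ((∫ x in (0 : ℝ)..1, (Real.cos x - 1) / x) + I))) := by
  obtain ⟨I, hI⟩ := exists_I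
  refine ⟨I, hI, ?_⟩
  set Y : Ω → ℝ := fun ω => |X ω| ^ α with hYdef
  have hY : Measurable Y := by
    apply Measurable.pow (hmeas.abs) measurable_const
  have hYnn : ∀ ω, 0 ≤ Y ω := fun ω => Real.rpow_nonneg (abs_nonneg _) α
  set F : ℝ → ℝ := fun t => (μ {ω | t < Y ω}).toReal with hFdef
  have hFanti : Antitone F := by
    intro s t hst
    apply ENNReal.toReal_mono (measure_ne_top μ _)
    exact measure_mono fun ω hω => lt_of_le_of_lt hst hω
  have hFmeas : Measurable F := hFanti.measurable
  have hF0 : ∀ t, 0 ≤ F t := fun t => ENNReal.toReal_nonneg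
  have hF1 : ∀ t, F t ≤ 1 := fun t => by
    have h := ENNReal.toReal_mono ENNReal.one_ne_top (prob_le_one (μ := μ) (s := {ω | t < Y ω}))
    simpa using h
  have htail' : ∀ t : ℝ, 1 ≤ t → |F t - c / t| ≤ d / t ^ 2 := by
    intro t ht
    have ht0 : (0:ℝ) < t := lt_of_lt_of_le one_pos ht
    set x : ℝ := t ^ (α⁻¹ : ℝ) with hxdef
    have hx1 : (1:ℝ) ≤ x := Real.one_le_rpow ht (by positivity)
    have hxα : x ^ α = t := by
      rw [hxdef, ← Real.rpow_mul ht0.le, inv_mul_cancel₀ hα0.ne', Real.rpow_one]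
    have hx2α : x ^ (2*α) = t ^ 2 := by
      rw [hxdef, ← Real.rpow_mul ht0.le, show α⁻¹ * (2*α) = 2 by field_simp, Real.rpow_two]
    have hset : {ω | t < Y ω} = {ω | x < |X ω|} := by
      ext ω
      simp only [Set.mem_setOf_eq, hYdef]
      rw [hxdef]
      exact (Real.rpow_inv_lt_iff_of_pos ht0.le (abs_nonneg _) hα0).symm
    have := htail x hx1
    rw [hxα, hx2α] at this
    rw [hFdef]
    simpa [hset] using this
  have hfub : ∀ N : ℝ, 0 < N → ∀ M : ℝ, 0 ≤ M →
      ∫ ω, N * Real.sin (min (Y ω) M / N) ∂μ = ∫ t in Set.Ioc 0 M, Real.cos (t / N) * F t := by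
    intro N hN M hM
    have hGmeas : Measurable (fun p : Ω × ℝ => if p.2 < Y p.1 then Real.cos (p.2 / N) else 0) := by
      apply Measurable.ite
      · exact measurableSet_lt measurable_snd (hY.comp measurable_fst)
      · exact Real.measurable_cos.comp (measurable_snd.div_const N)
      · exact measurable_const
    have hGint : Integrable (fun p : Ω × ℝ => if p.2 < Y p.1 then Real.cos (p.2 / N) else 0)
        (μ.prod (volume.restrict (Set.Ioc 0 M))) := by
      refine Integrable.mono' (integrable_const 1) hGmeas.aestronglyMeasurable ?_
      filter_upwards with p
      by_cases h : p.2 < Y p.1 <;> simp [h, Real.abs_cos_le_one]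
    have swap := MeasureTheory.integral_integral_swap
      (f := fun (ω : Ω) (t : ℝ) => if t < Y ω then Real.cos (t / N) else 0) hGint
    have hLHS : ∀ ω, (∫ t in Set.Ioc 0 M, if t < Y ω then Real.cos (t / N) else 0)
        = N * Real.sin (min (Y ω) M / N) := by
      intro ω
      have h1 : (fun t => if t < Y ω then Real.cos (t / N) else 0)
          = (Set.Iio (Y ω)).indicator (fun t => Real.cos (t / N)) := by
        funext t; simp [Set.indicator_apply, Set.mem_Iio]
      rw [h1, MeasureTheory.setIntegral_indicator measurableSet_Iio]
      have hsub : (Set.Ioc 0 M ∩ Set.Iio (Y ω)) ⊆ Set.Ioc 0 (min (Y ω) M) := fun t ht =>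
        ⟨ht.1.1, le_min (le_of_lt ht.2) ht.1.2⟩
      have hsub2 : Set.Ioc 0 (min (Y ω) M) \ (Set.Ioc 0 M ∩ Set.Iio (Y ω)) ⊆ {Y ω} := by
        intro t ht
        rcases ht with ⟨⟨ht0, htm⟩, hnot⟩
        simp only [Set.mem_inter_iff, Set.mem_Ioc, Set.mem_Iio, not_and, not_lt] at hnot
        have h3 := hnot ⟨ht0, htm.trans (min_le_right _ _)⟩
        have h4 : t ≤ Y ω := htm.trans (min_le_left _ _)
        simp [le_antisymm h4 h3]
      have h2 : (Set.Ioc 0 M ∩ Set.Iio (Y ω) : Set ℝ) =ᵐ[volume]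
          (Set.Ioc 0 (min (Y ω) M) : Set ℝ) := by
        rw [MeasureTheory.ae_eq_set]
        constructor
        · rw [Set.diff_eq_empty.mpr hsub]; exact measure_empty
        · exact measure_mono_null hsub2 (measure_singleton _)
      rw [MeasureTheory.setIntegral_congr_set h2,
        ← intervalIntegral.integral_of_le (le_min (hYnn ω) hM),
        intervalIntegral.integral_comp_div (f := Real.cos) (c := N) hN.ne',
        integral_cos]
      rw [zero_div, Real.sin_zero, sub_zero, smul_eq_mul]
    have hRHS : ∀ t : ℝ, (∫ ω, (if t < Y ω then Real.cos (t / N) else 0) ∂μ)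
        = Real.cos (t / N) * F t := by
      intro t
      have h1 : (fun ω => if t < Y ω then Real.cos (t / N) else 0)
          = Set.indicator {ω | t < Y ω} (fun _ => Real.cos (t / N)) := by
        funext ω; simp [Set.indicator_apply, Set.mem_setOf_eq]
      rw [h1, MeasureTheory.integral_indicator_const _ (measurableSet_lt measurable_const hY)]
      rw [smul_eq_mul, mul_comm]; rfl
    calc ∫ ω, N * Real.sin (min (Y ω) M / N) ∂μ
        = ∫ ω, (∫ t in Set.Ioc 0 M, (if t < Y ω then Real.cos (t / N) else 0)) ∂μ :=
          integral_congr_ae (ae_of_all _ fun ω => (hLHS ω).symm)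
      _ = ∫ t in Set.Ioc 0 M, (∫ ω, (if t < Y ω then Real.cos (t / N) else 0) ∂μ) := swap
      _ = ∫ t in Set.Ioc 0 M, Real.cos (t / N) * F t :=
          integral_congr_ae (ae_of_all _ fun t => hRHS t)
  have hd2int : IntegrableOn (fun t : ℝ => d / t ^ 2) (Set.Ioi 1) := by
    have h : IntegrableOn (fun x : ℝ => x ^ (-2 : ℝ)) (Set.Ioi 1) :=
      integrableOn_Ioi_rpow_of_lt (by norm_num) one_pos
    apply (h.const_mul d).congr
    filter_upwards [ae_restrict_mem measurableSet_Ioi] with x hx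
    have hx0 : (0:ℝ) < x := lt_trans one_pos hx
    rw [Real.rpow_neg hx0.le, Real.rpow_two, div_eq_mul_inv]
  have hBint : ∀ N : ℝ, IntegrableOn (fun t => Real.cos (t / N) * (F t - c / t)) (Set.Ioi 1) := by
    intro N
    refine Integrable.mono' hd2int ?_ ?_
    · exact ((Real.measurable_cos.comp (measurable_id.div_const N)).mul
        (hFmeas.sub ((measurable_const (a := c)).div measurable_id))).aestronglyMeasurable
    · filter_upwards [ae_restrict_mem measurableSet_Ioi] with t ht
      have h1 : |F t - c / t| ≤ d / t ^ 2 := htail' t (le_of_lt ht)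
      rw [Real.norm_eq_abs, abs_mul]
      calc |Real.cos (t / N)| * |F t - c / t| ≤ 1 * (d / t ^ 2) :=
            mul_le_mul (Real.abs_cos_le_one _) h1 (abs_nonneg _) zero_le_one
        _ = d / t ^ 2 := one_mul _
  have hkey : ∀ n : ℕ, 1 ≤ n →
      (∫ ω, (n : ℝ) * Real.sin (Y ω / n) ∂μ)
        = (∫ t in Set.Ioc (0:ℝ) 1, Real.cos (t / n) * F t)
          + (∫ t in Set.Ioi (1:ℝ), Real.cos (t / n) * (F t - c / t))
          + c * ((∫ u in ((n:ℝ)⁻¹)..1, (Real.cos u - 1) / u) + Real.log n + I) := by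
    intro n hn
    have hN : (0:ℝ) < n := by exact_mod_cast hn
    set N : ℝ := (n : ℝ) with hNdef
    have hN1 : (1:ℝ) ≤ N := by rw [hNdef]; exact_mod_cast hn
    have hL : Tendsto (fun M : ℝ => ∫ ω, N * Real.sin (min (Y ω) M / N) ∂μ) atTop
        (nhds (∫ ω, N * Real.sin (Y ω / N) ∂μ)) := by
      apply MeasureTheory.tendsto_integral_filter_of_dominated_convergence (fun _ => N)
      · apply Eventually.of_forall; intro M
        exact ((Real.measurable_sin.comp ((hY.min measurable_const).div_const N)).const_mul
          N).aestronglyMeasurable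
      · apply Eventually.of_forall; intro M
        apply Eventually.of_forall; intro ω
        rw [Real.norm_eq_abs, abs_mul, abs_of_pos hN]
        calc N * |Real.sin (min (Y ω) M / N)| ≤ N * 1 :=
              mul_le_mul_of_nonneg_left (Real.abs_sin_le_one _) hN.le
          _ = N := mul_one N
      · exact integrable_const N
      · apply ae_of_all; intro ω
        refine tendsto_const_nhds.congr' ?_
        filter_upwards [eventually_ge_atTop (Y ω)] with M hM
        rw [min_eq_left hM]
    have hgint : ∀ a b : ℝ, IntegrableOn (fun t => Real.cos (t / N) * F t) (Set.Ioc a b) := by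
      intro a b
      refine Integrable.mono' (integrable_const 1)
        ((Real.measurable_cos.comp (measurable_id.div_const N)).mul hFmeas).aestronglyMeasurable ?_
      apply ae_of_all; intro t
      rw [Real.norm_eq_abs, abs_mul]
      calc |Real.cos (t / N)| * |F t| ≤ 1 * 1 := by
            refine mul_le_mul (Real.abs_cos_le_one _) ?_ (abs_nonneg _) zero_le_one
            rw [abs_of_nonneg (hF0 t)]; exact hF1 t
        _ = 1 := one_mul 1
    have hsplit : ∀ M : ℝ, 1 ≤ M →
        (∫ t in Set.Ioc (0:ℝ) M, Real.cos (t / N) * F t)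
          = (∫ t in Set.Ioc (0:ℝ) 1, Real.cos (t / N) * F t)
            + (∫ t in (1:ℝ)..M, Real.cos (t / N) * (F t - c / t))
            + c * (∫ t in (1:ℝ)..M, Real.cos (t / N) / t) := by
      intro M hM1
      have hunion : Set.Ioc (0:ℝ) 1 ∪ Set.Ioc (1:ℝ) M = Set.Ioc (0:ℝ) M :=
        Set.Ioc_union_Ioc_eq_Ioc zero_le_one hM1
      rw [← hunion, MeasureTheory.setIntegral_union (Set.Ioc_disjoint_Ioc_of_le le_rfl)
        measurableSet_Ioc (hgint 0 1) (hgint 1 M)]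
      have heq : Set.EqOn (fun t => Real.cos (t / N) * F t)
          (fun t => Real.cos (t / N) * (F t - c / t) + c * (Real.cos (t / N) / t))
          (Set.Ioc 1 M) := by
        intro t ht
        have ht0 : t ≠ 0 := by have := ht.1; intro h; rw [h] at this; linarith
        simp only []
        field_simp
        try ring
      have hmid := MeasureTheory.setIntegral_congr_fun (μ := volume) measurableSet_Ioc heq
      have hint1 : IntegrableOn (fun t => Real.cos (t / N) * (F t - c / t)) (Set.Ioc 1 M) :=
        (hBint N).mono_set Set.Ioc_subset_Ioi_self
      have hint2 : IntegrableOn (fun t => c * (Real.cos (t / N) / t)) (Set.Ioc 1 M) := by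
        refine Integrable.mono' (integrable_const (|c| * 1))
          (((Real.measurable_cos.comp (measurable_id.div_const N)).div
            measurable_id).const_mul c).aestronglyMeasurable ?_
        filter_upwards [ae_restrict_mem measurableSet_Ioc] with t ht
        have ht1 : (1:ℝ) ≤ t := ht.1.le
        have ht0 : (0:ℝ) < t := lt_of_lt_of_le one_pos ht1
        rw [Real.norm_eq_abs, abs_mul, abs_div, abs_of_pos ht0]
        refine mul_le_mul_of_nonneg_left ?_ (abs_nonneg c)
        calc |Real.cos (t / N)| / t ≤ 1 / t := (div_le_div_iff_of_pos_right ht0).mpr (Real.abs_cos_le_one _)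
          _ ≤ 1 := by rw [div_le_one ht0]; exact ht1
      rw [MeasureTheory.integral_add hint1 hint2] at hmid
      rw [hmid, ← intervalIntegral.integral_of_le hM1, ← intervalIntegral.integral_of_le hM1,
        intervalIntegral.integral_const_mul]
      try ring
    have hcos_cont : ∀ a b : ℝ, 0 < a → 0 < b →
        IntervalIntegrable (fun u => Real.cos u / u) volume a b := by
      intro a b ha hb
      apply ContinuousOn.intervalIntegrable
      apply Real.continuous_cos.continuousOn.div continuousOn_id
      intro x hx
      have : 0 < x := by
        rcases Set.mem_uIcc.mp hx with h | h
        · exact lt_of_lt_of_le ha h.1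
        · exact lt_of_lt_of_le hb h.1
      simp only [id_eq]; exact this.ne'
    have hsub : ∀ M : ℝ, 1 ≤ M →
        (∫ t in (1:ℝ)..M, Real.cos (t / N) / t)
          = (∫ u in (N⁻¹)..1, Real.cos u / u) + (∫ u in (1:ℝ)..(M / N), Real.cos u / u) := by
      intro M hM1
      have heq : (fun t : ℝ => Real.cos (t / N) / t)
          = fun t => N⁻¹ • ((fun u => Real.cos u / u) (t / N)) := by
        funext t
        by_cases ht : t = 0
        · simp [ht]
        · simp only [smul_eq_mul]
          field_simp
      rw [heq, intervalIntegral.integral_smul,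
        intervalIntegral.integral_comp_div (f := fun u => Real.cos u / u) hN.ne',
        smul_smul, inv_mul_cancel₀ hN.ne', one_smul, one_div]
      exact (intervalIntegral.integral_add_adjacent_intervals
        (hcos_cont _ _ (by positivity) one_pos)
        (hcos_cont _ _ one_pos (by positivity))).symm
    have hNinv1 : (0:ℝ) < N⁻¹ := by positivity
    have hpos_uIcc : ∀ x ∈ Set.uIcc (N⁻¹ : ℝ) 1, 0 < x := by
      intro x hx
      rcases Set.mem_uIcc.mp hx with h | h
      · exact lt_of_lt_of_le hNinv1 h.1
      · exact lt_of_lt_of_le one_pos h.1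
    have hlog : (∫ u in (N⁻¹ : ℝ)..1, Real.cos u / u)
        = (∫ u in (N⁻¹ : ℝ)..1, (Real.cos u - 1) / u) + Real.log N := by
      have heq : Set.EqOn (fun u : ℝ => Real.cos u / u)
          (fun u => (Real.cos u - 1) / u + 1 / u) (Set.uIcc (N⁻¹ : ℝ) 1) := by
        intro u hu
        have hu0 : u ≠ 0 := (hpos_uIcc u hu).ne'
        field_simp
        ring
      rw [intervalIntegral.integral_congr heq]
      have h1 : IntervalIntegrable (fun u : ℝ => (Real.cos u - 1) / u) volume (N⁻¹ : ℝ) 1 := by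
        apply ContinuousOn.intervalIntegrable
        apply ((Real.continuous_cos.sub continuous_const).continuousOn).div continuousOn_id
        intro x hx; simp only [id_eq]; exact (hpos_uIcc x hx).ne'
      have h2 : IntervalIntegrable (fun u : ℝ => 1 / u) volume (N⁻¹ : ℝ) 1 := by
        apply ContinuousOn.intervalIntegrable
        apply (continuous_const.continuousOn).div continuousOn_id
        intro x hx; simp only [id_eq]; exact (hpos_uIcc x hx).ne'
      rw [intervalIntegral.integral_add h1 h2, integral_one_div
        (fun h => absurd (hpos_uIcc 0 h) (lt_irrefl 0)), one_div, inv_inv]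
    have hglim : Tendsto (fun M : ℝ => ∫ u in (1:ℝ)..(M / N), Real.cos u / u) atTop (nhds I) :=
      hI.comp (tendsto_id.atTop_div_const hN)
    have hBlim : Tendsto (fun M : ℝ => ∫ t in (1:ℝ)..M, Real.cos (t / N) * (F t - c / t)) atTop
        (nhds (∫ t in Set.Ioi (1:ℝ), Real.cos (t / N) * (F t - c / t))) :=
      intervalIntegral_tendsto_integral_Ioi 1 (hBint N) tendsto_id
    have h3 : Tendsto (fun M : ℝ => c * ((∫ u in (N⁻¹ : ℝ)..1, Real.cos u / u)
        + ∫ u in (1:ℝ)..(M / N), Real.cos u / u)) atTop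
        (nhds (c * ((∫ u in (N⁻¹ : ℝ)..1, Real.cos u / u) + I))) :=
      (tendsto_const_nhds.add hglim).const_mul c
    have htot := ((tendsto_const_nhds (x := ∫ t in Set.Ioc (0:ℝ) 1, Real.cos (t / N) * F t)).add hBlim).add h3
    rw [show (∫ t in Set.Ioc (0:ℝ) 1, Real.cos (t / N) * F t)
        + (∫ t in Set.Ioi (1:ℝ), Real.cos (t / N) * (F t - c / t))
        + c * ((∫ u in (N⁻¹ : ℝ)..1, Real.cos u / u) + I)
        = (∫ t in Set.Ioc (0:ℝ) 1, Real.cos (t / N) * F t)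
        + (∫ t in Set.Ioi (1:ℝ), Real.cos (t / N) * (F t - c / t))
        + c * ((∫ u in (N⁻¹ : ℝ)..1, (Real.cos u - 1) / u) + Real.log N + I)
      from by rw [hlog]] at htot
    have hR : Tendsto (fun M : ℝ => ∫ t in Set.Ioc (0:ℝ) M, Real.cos (t / N) * F t) atTop
        (nhds ((∫ t in Set.Ioc (0:ℝ) 1, Real.cos (t / N) * F t)
          + (∫ t in Set.Ioi (1:ℝ), Real.cos (t / N) * (F t - c / t))
          + c * ((∫ u in (N⁻¹ : ℝ)..1, (Real.cos u - 1) / u) + Real.log N + I))) := by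
      apply htot.congr'
      filter_upwards [eventually_ge_atTop (1:ℝ)] with M hM1
      rw [hsplit M hM1, hsub M hM1]
    have hL' : Tendsto (fun M : ℝ => ∫ t in Set.Ioc (0:ℝ) M, Real.cos (t / N) * F t) atTop
        (nhds (∫ ω, N * Real.sin (Y ω / N) ∂μ)) := by
      apply hL.congr'
      filter_upwards [eventually_ge_atTop (0:ℝ)] with M hM
      exact hfub N hN M hM
    have := tendsto_nhds_unique hL' hR
    simpa [hNdef] using this
  have hcoslim : ∀ t : ℝ, Tendsto (fun n : ℕ => Real.cos (t / n)) atTop (nhds 1) := by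
    intro t
    have h1 : Tendsto (fun n : ℕ => t / (n:ℝ)) atTop (nhds 0) :=
      tendsto_const_div_atTop_nhds_zero_nat t
    have h2 := (Real.continuous_cos.tendsto 0).comp h1
    rwa [Real.cos_zero] at h2
  have hAlim : Tendsto (fun n : ℕ => ∫ t in Set.Ioc (0:ℝ) 1, Real.cos (t / n) * F t) atTop
      (nhds (∫ t in Set.Ioc (0:ℝ) 1, F t)) := by
    apply MeasureTheory.tendsto_integral_filter_of_dominated_convergence (fun _ => (1:ℝ))
    · apply Eventually.of_forall; intro n
      exact ((Real.measurable_cos.comp (measurable_id.div_const _)).mul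
        hFmeas).aestronglyMeasurable
    · apply Eventually.of_forall; intro n
      apply ae_of_all; intro t
      rw [Real.norm_eq_abs, abs_mul]
      calc |Real.cos (t / n)| * |F t| ≤ 1 * 1 := by
            refine mul_le_mul (Real.abs_cos_le_one _) ?_ (abs_nonneg _) zero_le_one
            rw [abs_of_nonneg (hF0 t)]; exact hF1 t
        _ = 1 := one_mul 1
    · exact integrable_const 1
    · apply ae_of_all; intro t
      simpa using (hcoslim t).mul_const (F t)
  have hBlim2 : Tendsto (fun n : ℕ => ∫ t in Set.Ioi (1:ℝ), Real.cos (t / n) * (F t - c / t))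
      atTop (nhds (∫ t in Set.Ioi (1:ℝ), (F t - c / t))) := by
    apply MeasureTheory.tendsto_integral_filter_of_dominated_convergence (fun t => d / t ^ 2)
    · apply Eventually.of_forall; intro n
      exact ((Real.measurable_cos.comp (measurable_id.div_const _)).mul
        (hFmeas.sub ((measurable_const (a := c)).div measurable_id))).aestronglyMeasurable
    · apply Eventually.of_forall; intro n
      filter_upwards [ae_restrict_mem measurableSet_Ioi] with t ht
      rw [Real.norm_eq_abs, abs_mul]
      calc |Real.cos (t / n)| * |F t - c / t| ≤ 1 * (d / t ^ 2) :=
            mul_le_mul (Real.abs_cos_le_one _) (htail' t ht.le) (abs_nonneg _) zero_le_one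
        _ = d / t ^ 2 := one_mul _
    · exact hd2int
    · apply ae_of_all; intro t
      simpa using (hcoslim t).mul_const (F t - c / t)
  have hClim : Tendsto (fun n : ℕ => ∫ u in ((n:ℝ)⁻¹)..1, (Real.cos u - 1) / u) atTop
      (nhds (∫ u in (0:ℝ)..1, (Real.cos u - 1) / u)) := by
    have hbnd : ∀ u : ℝ, 0 < u → u ≤ 1 → |(Real.cos u - 1) / u| ≤ 1 / 2 := by
      intro u hu0 hu1
      rw [abs_div, abs_of_pos hu0, abs_sub_comm, abs_of_nonneg (by nlinarith [Real.cos_le_one u])]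
      rw [div_le_iff₀ hu0]
      nlinarith [Real.one_sub_sq_div_two_le_cos (x := u)]
    have hint : IntervalIntegrable (fun u : ℝ => (Real.cos u - 1) / u) volume 0 1 := by
      rw [intervalIntegrable_iff_integrableOn_Ioc_of_le zero_le_one]
      refine Integrable.mono' (integrable_const (1/2))
        (((Real.continuous_cos.sub continuous_const).measurable.div
          measurable_id)).aestronglyMeasurable ?_
      filter_upwards [ae_restrict_mem measurableSet_Ioc] with u hu
      rw [Real.norm_eq_abs]
      exact hbnd u hu.1 hu.2
    have hbn : ∀ n : ℕ, ‖∫ u in (0:ℝ)..((n:ℝ)⁻¹), (Real.cos u - 1) / u‖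
        ≤ (1/2) * (n:ℝ)⁻¹ := by
      intro n
      have hn0 : (0:ℝ) ≤ (n:ℝ)⁻¹ := by positivity
      have hn1 : ((n:ℝ)⁻¹) ≤ 1 := by
        rcases Nat.eq_zero_or_pos n with h | h
        · simp [h]
        · rw [inv_le_one_iff₀]; right; exact_mod_cast h
      have h := intervalIntegral.norm_integral_le_of_norm_le_const (C := 1/2)
        (a := (0:ℝ)) (b := ((n:ℝ)⁻¹)) (f := fun u => (Real.cos u - 1) / u) ?_
      · rw [sub_zero, abs_of_nonneg hn0] at h; exact h
      · intro u hu
        rw [Set.uIoc_of_le hn0] at hu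
        rw [Real.norm_eq_abs]
        exact hbnd u hu.1 (hu.2.trans hn1)
    have hzero : Tendsto (fun n : ℕ => ∫ u in (0:ℝ)..((n:ℝ)⁻¹), (Real.cos u - 1) / u) atTop
        (nhds 0) := by
      have ht : Tendsto (fun n : ℕ => (1/2 : ℝ) * (n:ℝ)⁻¹) atTop (nhds 0) := by
        have h2 := (tendsto_inv_atTop_zero.comp
          (tendsto_natCast_atTop_atTop (R := ℝ))).const_mul (1/2 : ℝ)
        simpa using h2
      exact squeeze_zero_norm hbn ht
    have hsplitC : ∀ n : ℕ, (∫ u in ((n:ℝ)⁻¹)..1, (Real.cos u - 1) / u)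
        = (∫ u in (0:ℝ)..1, (Real.cos u - 1) / u)
          - ∫ u in (0:ℝ)..((n:ℝ)⁻¹), (Real.cos u - 1) / u := by
      intro n
      have hmem : ((n:ℝ)⁻¹) ∈ Set.uIcc (0:ℝ) 1 := by
        rw [Set.uIcc_of_le zero_le_one]
        refine ⟨by positivity, ?_⟩
        rcases Nat.eq_zero_or_pos n with h | h
        · simp [h]
        · rw [inv_le_one_iff₀]; right; exact_mod_cast h
      have h1 : IntervalIntegrable (fun u : ℝ => (Real.cos u - 1) / u) volume 0 ((n:ℝ)⁻¹) :=
        hint.mono_set (Set.uIcc_subset_uIcc Set.left_mem_uIcc hmem)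
      have h2 : IntervalIntegrable (fun u : ℝ => (Real.cos u - 1) / u) volume ((n:ℝ)⁻¹) 1 :=
        hint.mono_set (Set.uIcc_subset_uIcc hmem Set.right_mem_uIcc)
      have h3 := intervalIntegral.integral_add_adjacent_intervals h1 h2
      linarith [h3]
    have h := (tendsto_const_nhds (x := ∫ u in (0:ℝ)..1, (Real.cos u - 1) / u)).sub hzero
    rw [sub_zero] at h
    apply h.congr
    intro n
    exact (hsplitC n).symm
  have hfinal := (hAlim.add hBlim2).add ((hClim.add_const I).const_mul c)
  have hmain : Tendsto (fun n : ℕ => (∫ ω, (n:ℝ) * Real.sin (Y ω / n) ∂μ) - c * Real.log n)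
      atTop (nhds ((∫ t in Set.Ioc (0:ℝ) 1, F t) + (∫ t in Set.Ioi (1:ℝ), (F t - c / t))
        + c * ((∫ u in (0:ℝ)..1, (Real.cos u - 1) / u) + I))) := by
    apply hfinal.congr'
    filter_upwards [eventually_ge_atTop 1] with n hn
    rw [hkey n hn]
    ring
  rw [show (∫ x in (0:ℝ)..1, F x) = ∫ t in Set.Ioc (0:ℝ) 1, F t from
    intervalIntegral.integral_of_le zero_le_one]
  exact hmain
end
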